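/- arXiv:1401.7263 — 9 statements merged into one kernel-verified Lean document; each statement's English description precedes it below -/
import Mathlib

section
/- Let G be a pair of d-dimensional butterflies, i.e., the concatenation of two directed graphs each isomorphic to the d-dimensional standard butterfly. Then for every m ≤ d, G is a 2^m-concentrator: for every set A of 2^m input nodes (on layer 0) and every set B of 2^m output nodes (on layer 2d) there exist 2^m node-disjoint directed paths from A to B. -/
/-- A binary string of length `d`. -/
abbrev BStr (d : ℕ) := Fin d → Bool

/-- Adjacency relation of a pair of `d`-dimensional butterflies: two standard
`d`-dimensional butterflies concatenated by identifying output node `b` of the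
left butterfly with input node `τ b` of the right butterfly (every graph
obtained by concatenating two graphs isomorphic to the standard butterfly is of
this form, up to isomorphism).  A node is a pair (layer, string) with layers
`0,…,2d`; nodes on layers `0,…,d-1` carry left-butterfly labels, and nodes on
layers `d,…,2d` carry right-butterfly labels. -/
def pairAdj (d : ℕ) (τ : BStr d ≃ BStr d)
    (u v : Fin (2*d+1) × BStr d) : Prop :=
  (u.1 : ℕ) + 1 = (v.1 : ℕ) ∧
  (((v.1 : ℕ) < d ∧ ∀ j : Fin d, (j : ℕ) ≠ (u.1 : ℕ) → u.2 j = v.2 j) ∨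
   ((v.1 : ℕ) = d ∧ ∀ j : Fin d, (j : ℕ) ≠ (u.1 : ℕ) → u.2 j = τ.symm v.2 j) ∨
   (d ≤ (u.1 : ℕ) ∧ ∀ j : Fin d, (j : ℕ) ≠ (u.1 : ℕ) - d → u.2 j = v.2 j))

/-- `P` is a system of node-disjoint directed paths of the layered graph with
adjacency `Adj`, one path starting at each input node (layer `0`) in `A`, such
that the endpoints (on layer `2d`) are exactly the members of `B`.  (Any
directed path from layer `0` to layer `2d` passes through each layer exactly
once, so it is faithfully recorded by the string it visits on each layer.) -/
def IsPathSystemOn (d : ℕ)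
    (Adj : Fin (2*d+1) × BStr d → Fin (2*d+1) × BStr d → Prop)
    (A B : Finset (BStr d)) (P : BStr d → Fin (2*d+1) → BStr d) : Prop :=
  (∀ a ∈ A, P a 0 = a) ∧
  (∀ a ∈ A, ∀ i : Fin (2*d), Adj (i.castSucc, P a i.castSucc) (i.succ, P a i.succ)) ∧
  (∀ a ∈ A, P a (Fin.last (2*d)) ∈ B) ∧
  (∀ b ∈ B, ∃ a ∈ A, P a (Fin.last (2*d)) = b) ∧
  (∀ a ∈ A, ∀ a' ∈ A, a ≠ a' → ∀ i, P a i ≠ P a' i)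

/-!
Each butterfly routes a path by fixing the bits of its string one at a time, in increasing order.
Order `A` by binary value (bit `0` least significant) and send the source `a` of rank `ρ a` through
the first butterfly to a middle string whose first `m` bits spell `ρ a`. Two such paths meeting at
layer `i` have sources agreeing in all bits from `i` on, hence within `2 ^ i` of each other; their
ranks are then within `2 ^ i` of each other as well, and congruent modulo `2 ^ i`, so they are equal.
The other `d - m` bits of the middle strings are chosen by Hall's theorem so that the last `m` bits
of their images under `τ` are distinct; read backwards they give a bijection `g : A → [0, 2 ^ m)`,
and `a` is routed to the target of rank `g a` in `B` ordered by reversed binary value. Reversing the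
bit order turns the second butterfly into the first, so the same argument separates its paths.
-/

open Finset Function

namespace Nat

theorem eq_of_modEq_of_sub_le {r r' v v' n : ℕ} (hn : 0 < n) (hdiv : v / n = v' / n)
    (hmod : r ≡ r' [MOD n]) (h : r' - r ≤ v' - v) (h' : r - r' ≤ v - v') : r = r' := by
  have hv : v' - v < n ∧ v - v' < n := by
    have := div_add_mod v n
    have := div_add_mod v' n
    have := mod_lt v hn
    have := mod_lt v' hn
    rw [hdiv] at *
    generalize n * (v' / n) = q at *
    omega
  rcases le_total r r' with hr | hr
  · have := eq_zero_of_dvd_of_lt ((modEq_iff_dvd' hr).mp hmod) (by omega)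
    omega
  · have := eq_zero_of_dvd_of_lt ((modEq_iff_dvd' hr).mp hmod.symm) (by omega)
    omega

variable {d : ℕ}

theorem ofBits_injective : Injective (ofBits : (Fin d → Bool) → ℕ) := fun x y h =>
  funext fun j => by simpa using congrArg (testBit · j) h

theorem ofBits_div_two_pow_eq {x y : Fin d → Bool} {i : ℕ}
    (h : ∀ j : Fin d, i ≤ j → x j = y j) :
    ofBits x / 2 ^ i = ofBits y / 2 ^ i :=
  eq_of_testBit_eq fun t => by
    simp only [testBit_div_two_pow, testBit_ofBits]
    split_ifs
    · exact h _ (by simp)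
    · rfl

theorem eq_of_testBit_eq_of_lt_two_pow {x y m : ℕ} (hx : x < 2 ^ m) (hy : y < 2 ^ m)
    (h : ∀ t < m, x.testBit t = y.testBit t) : x = y := by
  rw [← mod_eq_of_lt hx, ← mod_eq_of_lt hy, ← ofBits_testBit, ← ofBits_testBit]
  exact congrArg ofBits (funext fun t => h t t.2)

theorem injOn_testBit {ι : Type*} {I : Set ι} {r : ι → ℕ} {m : ℕ} (hr : I.InjOn r)
    (hr_lt : ∀ k ∈ I, r k < 2 ^ m) : I.InjOn fun k (t : Fin m) => (r k).testBit t :=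
  fun k hk k' hk' h => hr hk hk' <|
    eq_of_testBit_eq_of_lt_two_pow (hr_lt k hk) (hr_lt k' hk') fun t ht => congrFun h ⟨t, ht⟩

end Nat

namespace Finset

variable {α : Type*} (v : α → ℕ) (s : Finset α)

def rankBy (a : α) : ℕ := #{x ∈ s | v x < v a}

variable {v s}

theorem rankBy_lt_card {a : α} (ha : a ∈ s) : s.rankBy v a < #s :=
  card_lt_card <| filter_ssubset.mpr ⟨a, ha, lt_irrefl _⟩

theorem rankBy_lt_rankBy {a a' : α} (ha : a ∈ s) (h : v a < v a') :
    s.rankBy v a < s.rankBy v a' :=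
  card_lt_card <| (ssubset_iff_of_subset (monotone_filter_right _ fun _ _ hx => hx.trans h)).mpr
    ⟨a, by simp [ha, h], by simp⟩

theorem rankBy_injOn (hv : Set.InjOn v s) : Set.InjOn (s.rankBy v) s := by
  intro a ha a' ha' h
  rcases lt_trichotomy (v a) (v a') with hlt | heq | hlt
  · exact absurd h (rankBy_lt_rankBy ha hlt).ne
  · exact hv ha ha' heq
  · exact absurd h (rankBy_lt_rankBy ha' hlt).ne'

theorem rankBy_bijOn (hv : Set.InjOn v s) : Set.BijOn (s.rankBy v) s (range #s) := by
  refine ⟨fun a ha => mem_coe.mpr (mem_range.mpr (rankBy_lt_card ha)), rankBy_injOn hv, ?_⟩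
  exact surjOn_of_injOn_of_card_le _ (fun a ha => mem_range.mpr (rankBy_lt_card ha))
    (rankBy_injOn hv) (card_range _).le

theorem rankBy_sub_rankBy_le (hv : Set.InjOn v s) (a a' : α) :
    s.rankBy v a' - s.rankBy v a ≤ v a' - v a := by
  classical
  have hcover : {x ∈ s | v x < v a'} ⊆
      {x ∈ s | v x < v a} ∪ {x ∈ s | v x ∈ Ico (v a) (v a')} := by
    intro x hx
    obtain ⟨hxs, hxa'⟩ := mem_filter.mp hx
    by_cases hxa : v x < v a
    · exact mem_union_left _ (mem_filter.mpr ⟨hxs, hxa⟩)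
    · exact mem_union_right _ (mem_filter.mpr ⟨hxs, mem_Ico.mpr ⟨not_lt.mp hxa, hxa'⟩⟩)
  have hgap : #{x ∈ s | v x ∈ Ico (v a) (v a')} ≤ v a' - v a :=
    (card_le_card_of_injOn v (fun x hx => (mem_filter.mp hx).2) (hv.mono (filter_subset _ _))).trans
      (Nat.card_Ico _ _).le
  have := (card_le_card hcover).trans (card_union_le _ _)
  unfold rankBy
  omega

theorem exists_bijOn_rankBy_eq {ι : Type*} [Nonempty α]
    (hv : Set.InjOn v s) {I : Set ι} {g : ι → ℕ} (hg : Set.BijOn g I (range #s)) :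
    ∃ b : ι → α, Set.BijOn b I s ∧ ∀ k ∈ I, s.rankBy v (b k) = g k := by
  have hrank := rankBy_bijOn hv
  exact ⟨invFunOn (s.rankBy v) s ∘ g, (hrank.symm hrank.invOn_invFunOn.symm).comp hg,
    fun k hk => hrank.invOn_invFunOn.2 (hg.mapsTo hk)⟩

end Finset

/-- Hall's condition holds because the `x` with `f x ∈ A` number at least `n * #A` and are covered
by at most `n` per value of `g`. -/
theorem Fintype.exists_injective_of_card_fiber_le {X α β : Type*} [Fintype X] [DecidableEq α]
    [Fintype β] [DecidableEq β] (f : X → α) (g : X → β) {n : ℕ} (hn : 0 < n)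
    (hf : ∀ a, n ≤ #{x | f x = a}) (hg : ∀ b, #{x | g x = b} ≤ n) :
    ∃ φ : α → β, Injective φ ∧ ∀ a, ∃ x, f x = a ∧ g x = φ a := by
  classical
  refine (Fintype.all_card_le_filter_rel_iff_exists_injective
    fun a b => ∃ x, f x = a ∧ g x = b).mp fun A => ?_
  have hlower : n * #A ≤ #{x | f x ∈ A} :=
    mul_card_image_le_card_of_maps_to (fun x hx => (mem_filter.mp hx).2) n fun a ha =>
      (hf a).trans (card_le_card fun x hx => by simp_all)
  have hupper : #{x | f x ∈ A} ≤ n * #{b | ∃ a ∈ A, ∃ x, f x = a ∧ g x = b} :=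
    card_le_mul_card_image_of_maps_to (f := g)
      (fun x hx => mem_filter.mpr ⟨mem_univ _, _, (mem_filter.mp hx).2, x, rfl, rfl⟩)
      n fun b _ => (card_le_card fun x hx =>
        mem_filter.mpr ⟨mem_univ _, (mem_filter.mp hx).2⟩).trans (hg b)
  exact Nat.le_of_mul_le_mul_left (hlower.trans hupper) hn

theorem card_filter_comp_castLE_eq {β : Type*} [Fintype β] [DecidableEq β] {m d : ℕ}
    (hm : m ≤ d) (p : Fin m → β) :
    #{x : Fin d → β | x ∘ Fin.castLE hm = p} = Fintype.card β ^ (d - m) := by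
  obtain ⟨k, rfl⟩ := Nat.exists_eq_add_of_le hm
  rw [← Fintype.card_subtype, Nat.add_sub_cancel_left]
  rw [show Fintype.card β ^ k = Fintype.card (Fin k → β) by simp]
  refine Fintype.card_congr
    { toFun := fun x j => x.1 (Fin.natAdd m j)
      invFun := fun y => ⟨Fin.append p y, funext fun u => Fin.append_left p y u⟩
      left_inv := fun ⟨x, hx⟩ => by subst hx; exact Subtype.ext Fin.append_castAdd_natAdd
      right_inv := fun y => funext fun j => Fin.append_right p y j }

namespace Butterfly

variable {d : ℕ}

def splice {β : Type*} (i : ℕ) (x y : Fin d → β) : Fin d → β :=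
  fun j => if (j : ℕ) < i then y j else x j

section splice

variable {β : Type*} {i : ℕ} {x y : Fin d → β}

@[simp] theorem splice_zero : splice 0 x y = x :=
  funext fun j => if_neg j.val.not_lt_zero

theorem splice_of_le (h : d ≤ i) : splice i x y = y :=
  funext fun j => if_pos (j.2.trans_le h)

theorem splice_succ_apply {j : Fin d} (hj : (j : ℕ) ≠ i) :
    splice (i + 1) x y j = splice i x y j := by
  simp only [splice]
  congr 1
  exact propext (by omega)

theorem splice_sub_comp_rev :
    splice (d - i) x y ∘ Fin.rev = splice i (y ∘ Fin.rev) (x ∘ Fin.rev) := by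
  funext j
  simp only [splice, Function.comp_apply, Fin.val_rev]
  split_ifs <;> first | rfl | omega

end splice

/-- Equal nodes force `src k`, `src k'` to lie within `2 ^ i` of each other and `r k`, `r k'` to
agree modulo `2 ^ i`. -/
theorem injOn_splice {ι : Type*} {m : ℕ} (hm : m ≤ d) {I : Set ι} {src mid : ι → BStr d}
    {r : ι → ℕ} (hr_inj : I.InjOn r) (hr_lt : ∀ k ∈ I, r k < 2 ^ m)
    (hr_sub : ∀ k ∈ I, ∀ k' ∈ I, r k' - r k ≤ Nat.ofBits (src k') - Nat.ofBits (src k))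
    (hmid : ∀ k ∈ I, ∀ j : Fin d, (j : ℕ) < m → mid k j = (r k).testBit j) (i : ℕ) :
    I.InjOn fun k => splice i (src k) (mid k) := by
  intro k hk k' hk' heq
  have hagree (j : Fin d) : splice i (src k) (mid k) j = splice i (src k') (mid k') j :=
    congrFun heq j
  have hsrc : Nat.ofBits (src k) / 2 ^ i = Nat.ofBits (src k') / 2 ^ i :=
    Nat.ofBits_div_two_pow_eq fun j hj => by simpa [splice, not_lt.mpr hj] using hagree j
  have hrank : r k ≡ r k' [MOD 2 ^ i] := Nat.eq_of_testBit_eq fun t => by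
    simp only [Nat.testBit_mod_two_pow]
    by_cases hti : t < i
    · by_cases htm : t < m
      · have := hagree ⟨t, htm.trans_le hm⟩
        simp only [splice, hti, if_true] at this
        rw [show t = ((⟨t, htm.trans_le hm⟩ : Fin d) : ℕ) from rfl, ← hmid k hk _ htm,
          ← hmid k' hk' _ htm, this]
      · have hpow := Nat.pow_le_pow_right two_pos (not_lt.mp htm)
        rw [Nat.testBit_lt_two_pow ((hr_lt k hk).trans_le hpow),
          Nat.testBit_lt_two_pow ((hr_lt k' hk').trans_le hpow)]
    · simp [hti]
  exact hr_inj hk hk' <| Nat.eq_of_modEq_of_sub_le (Nat.two_pow_pos i) hsrc hrank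
    (hr_sub k hk k' hk') (hr_sub k' hk' k hk)

theorem injOn_splice_rev {ι : Type*} {m : ℕ} (hm : m ≤ d) {I : Set ι}
    {mid tgt : ι → BStr d} {r : ι → ℕ} (hr_inj : I.InjOn r)
    (hr_lt : ∀ k ∈ I, r k < 2 ^ m)
    (hr_sub : ∀ k ∈ I, ∀ k' ∈ I,
      r k' - r k ≤ Nat.ofBits (tgt k' ∘ Fin.rev) - Nat.ofBits (tgt k ∘ Fin.rev))
    (hmid : ∀ k ∈ I, ∀ j : Fin d, (j : ℕ) < m → mid k j.rev = (r k).testBit j) (i : ℕ) :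
    I.InjOn fun k => splice i (mid k) (tgt k) := by
  have hrev : (fun k => splice i (mid k) (tgt k)) =
      (· ∘ Fin.rev) ∘ fun k => splice (d - i) (tgt k ∘ Fin.rev) (mid k ∘ Fin.rev) :=
    funext fun k => by
      simp [splice_sub_comp_rev, Function.comp_assoc, Fin.rev_involutive.comp_self]
  rw [hrev]
  exact Fin.rev_surjective.injective_comp_right.comp_injOn
    (injOn_splice hm (src := fun k => tgt k ∘ Fin.rev) hr_inj hr_lt hr_sub hmid (d - i))

/-- A matching in the `2 ^ (d - m)`-regular bipartite multigraph joining the prefix of each string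
to the reversed suffix of its image under `τ`. -/
theorem exists_prefix_matching {m : ℕ} (hm : m ≤ d) (τ : BStr d ≃ BStr d) :
    ∃ L : (Fin m → Bool) → BStr d, (∀ p, L p ∘ Fin.castLE hm = p) ∧
      Injective fun p => τ (L p) ∘ Fin.rev ∘ Fin.castLE hm := by
  classical
  have hfiber (q : Fin m → Bool) :
      #{x : BStr d | τ x ∘ Fin.rev ∘ Fin.castLE hm = q} = 2 ^ (d - m) := by
    rw [← Fintype.card_bool, ← card_filter_comp_castLE_eq hm q]
    refine card_equiv (τ.trans (Equiv.arrowCongr Fin.revPerm (Equiv.refl Bool))) fun x => ?_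
    simp [Function.comp_def]
  obtain ⟨φ, hφ, hL⟩ := Fintype.exists_injective_of_card_fiber_le
    (fun x : BStr d => x ∘ Fin.castLE hm) (fun x => τ x ∘ Fin.rev ∘ Fin.castLE hm)
    (Nat.two_pow_pos (d - m)) (fun p => (card_filter_comp_castLE_eq hm p).ge) fun q => (hfiber q).le
  choose L hL_prefix hL_suffix using hL
  exact ⟨L, hL_prefix, fun p p' h => hφ (by simpa only [hL_suffix] using h)⟩

section pairPath

variable (τ : BStr d ≃ BStr d)

def pairPath (x y w : BStr d) (i : Fin (2 * d + 1)) : BStr d :=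
  if (i : ℕ) < d then splice i x y else splice (i - d) (τ y) w

variable {τ} {x y w : BStr d} {i : Fin (2 * d + 1)}

theorem pairPath_of_lt (h : (i : ℕ) < d) : pairPath τ x y w i = splice i x y := if_pos h

theorem pairPath_of_le (h : d ≤ i) : pairPath τ x y w i = splice (i - d) (τ y) w :=
  if_neg h.not_gt

theorem pairPath_zero : pairPath τ x y w 0 = x := funext fun j => by
  rw [pairPath_of_lt (by simpa using j.pos), Fin.val_zero, splice_zero]

theorem pairPath_last : pairPath τ x y w (Fin.last (2 * d)) = w := funext fun j => by
  rw [pairPath_of_le (by simp; omega), splice_of_le (by simp; omega)]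

theorem pairAdj_pairPath (i : Fin (2 * d)) :
    pairAdj d τ (i.castSucc, pairPath τ x y w i.castSucc) (i.succ, pairPath τ x y w i.succ) := by
  have hi2d := i.2
  refine ⟨by simp, ?_⟩
  rcases lt_trichotomy ((i : ℕ) + 1) d with h | h | h
  · refine Or.inl ⟨by simpa using h, fun j hj => ?_⟩
    simp only [pairPath_of_lt (i := i.castSucc) (by simp; omega), pairPath_of_lt (i := i.succ)
      (by simpa using h), Fin.val_castSucc, Fin.val_succ]
    exact (splice_succ_apply hj).symm
  · refine Or.inr (Or.inl ⟨by simpa using h, fun j hj => ?_⟩)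
    simp only [pairPath_of_lt (i := i.castSucc) (by simp; omega), pairPath_of_le (i := i.succ)
      (by simp; omega), Fin.val_castSucc, Fin.val_succ, h, Nat.sub_self, splice_zero,
      Equiv.symm_apply_apply]
    rw [← splice_succ_apply (i := (i : ℕ)) (by simpa using hj), h, splice_of_le le_rfl]
  · refine Or.inr (Or.inr ⟨by simp; omega, fun j hj => ?_⟩)
    simp only [pairPath_of_le (i := i.castSucc) (by simp; omega), pairPath_of_le (i := i.succ)
      (by simp; omega), Fin.val_castSucc, Fin.val_succ,
      Nat.sub_add_comm (by omega : d ≤ (i : ℕ))]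
    exact (splice_succ_apply hj).symm

theorem isPathSystemOn_pairPath {A B : Finset (BStr d)} {mid b : BStr d → BStr d}
    (hb_maps : Set.MapsTo b A B) (hb_surj : Set.SurjOn b A B)
    (hdisj : ∀ i, Set.InjOn (fun a => pairPath τ a (mid a) (b a) i) A) :
    IsPathSystemOn d (pairAdj d τ) A B fun a => pairPath τ a (mid a) (b a) := by
  refine ⟨fun a _ => pairPath_zero, fun a _ i => pairAdj_pairPath i, fun a ha => ?_,
    fun c hc => ?_, fun a ha a' ha' hne i h => hne (hdisj i ha ha' h)⟩
  · simpa only [pairPath_last, mem_coe] using hb_maps ha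
  · obtain ⟨a, ha, rfl⟩ := hb_surj hc
    exact ⟨a, ha, pairPath_last⟩

end pairPath

end Butterfly

open Butterfly

/-- any pair of `d`-dimensional butterflies is a `2^m`-concentrator
for every `m ≤ d`. -/
theorem pair_of_butterflies_pow_two_concentrator
    (d m : ℕ) (hm : m ≤ d) (τ : BStr d ≃ BStr d)
    (A B : Finset (BStr d)) (hA : A.card = 2 ^ m) (hB : B.card = 2 ^ m) :
    ∃ P : BStr d → Fin (2*d+1) → BStr d,
      IsPathSystemOn d (pairAdj d τ) A B P := by
  classical
  obtain ⟨L, hL_prefix, hL_inj⟩ := exists_prefix_matching hm τ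
  set rankA := A.rankBy Nat.ofBits
  have hrankA_lt (a) (ha : a ∈ A) : rankA a < 2 ^ m := hA ▸ rankBy_lt_card ha
  have hrankA_inj : Set.InjOn rankA A := rankBy_injOn Nat.ofBits_injective.injOn
  set mid := fun a => L fun u : Fin m => (rankA a).testBit u
  set g := fun a => Nat.ofBits (τ (mid a) ∘ Fin.rev ∘ Fin.castLE hm)
  have hg_maps : Set.MapsTo g A (range (2 ^ m)) := fun a _ => by simp [g, Nat.ofBits_lt_two_pow]
  have hg_inj : Set.InjOn g A :=
    (Nat.ofBits_injective.comp hL_inj).comp_injOn (Nat.injOn_testBit hrankA_inj hrankA_lt)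
  have hg : Set.BijOn g A (range (2 ^ m)) :=
    ⟨hg_maps, hg_inj, surjOn_of_injOn_of_card_le _ hg_maps hg_inj (by simp [hA])⟩
  have hvR : Injective fun c : BStr d => Nat.ofBits (c ∘ Fin.rev) :=
    Nat.ofBits_injective.comp Fin.rev_surjective.injective_comp_right
  obtain ⟨b, hb, hb_rank⟩ := exists_bijOn_rankBy_eq hvR.injOn (hB ▸ hg)
  refine ⟨fun a => pairPath τ a (mid a) (b a),
    isPathSystemOn_pairPath hb.mapsTo hb.surjOn fun i => ?_⟩
  by_cases hi : (i : ℕ) < d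
  · simp only [pairPath_of_lt hi]
    refine injOn_splice hm (src := id) hrankA_inj hrankA_lt
      (fun a _ a' _ => rankBy_sub_rankBy_le Nat.ofBits_injective.injOn a a') (fun a _ j hj => ?_) i
    simpa using congrFun (hL_prefix _) ⟨j, hj⟩
  · simp only [pairPath_of_le (not_lt.mp hi)]
    refine injOn_splice_rev hm hg_inj (fun a ha => mem_range.mp (hg_maps ha))
      (fun a ha a' ha' => ?_) (fun a _ j hj => ?_) _
    · rw [← hb_rank a ha, ← hb_rank a' ha']
      exact rankBy_sub_rankBy_le hvR.injOn _ _
    · simp [g, Nat.testBit_ofBits_lt _ _ hj]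
end

section
/- Let G be a pair of d-dimensional butterflies, A a set of input nodes and B a set of output nodes with |A| = |B|. If there exist |A| node-disjoint directed paths from A to B, then there exist 2^d − |A| node-disjoint directed paths from the complement A^c (the remaining input nodes) to the complement B^c (the remaining output nodes). -/
/-- flip bit `j` -/
def bflip {d : ℕ} (j : Fin d) (u : BStr d) : BStr d := Function.update u j (!(u j))

lemma bflip_apply {d : ℕ} (j : Fin d) (u : BStr d) : bflip j u j = !(u j) := by
  simp [bflip]

lemma bflip_ne {d : ℕ} (j : Fin d) (u : BStr d) : bflip j u ≠ u := by
  intro h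
  have := congrFun h j
  rw [bflip_apply] at this
  exact (Bool.not_ne_self _) this

lemma bflip_bflip {d : ℕ} (j : Fin d) (u : BStr d) : bflip j (bflip j u) = u := by
  funext x
  by_cases h : x = j
  · subst h; simp [bflip]
  · simp [bflip, Function.update_of_ne h]

/-- the bit switched at layer `i → i+1` -/
def bbit (d : ℕ) (i : Fin (2*d)) : Fin d :=
  ⟨if (i : ℕ) < d then (i : ℕ) else (i : ℕ) - d, by
    have h := i.isLt; split_ifs <;> omega⟩

/-- the relabeling applied at layer `i → i+1` -/
def bpsi {d : ℕ} (τ : BStr d ≃ BStr d) (i : ℕ) : BStr d ≃ BStr d :=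
  if i + 1 = d then τ else Equiv.refl _

lemma offdiag_iff {d : ℕ} (j₀ : Fin d) (u w : BStr d) :
    (∀ j : Fin d, (j : ℕ) ≠ (j₀ : ℕ) → u j = w j) ↔ (w = u ∨ w = bflip j₀ u) := by
  constructor
  · intro hw
    by_cases h : w j₀ = u j₀
    · left; funext j
      by_cases hj : j = j₀
      · subst hj; exact h
      · exact (hw j (by simpa [Fin.val_eq_val] using hj)).symm
    · right
      funext j
      by_cases hj : j = j₀
      · subst hj
        rw [bflip_apply]
        revert h; cases u j <;> cases w j <;> simp
      · rw [bflip, Function.update_of_ne hj]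
        exact (hw j (by simpa [Fin.val_eq_val] using hj)).symm
  · rintro (rfl | rfl) j hj
    · rfl
    · have hj' : j ≠ j₀ := by simpa [Fin.val_eq_val] using hj
      rw [bflip, Function.update_of_ne hj']

lemma adj_iff {d : ℕ} (τ : BStr d ≃ BStr d) (i : Fin (2*d)) (u v : BStr d) :
    pairAdj d τ (i.castSucc, u) (i.succ, v) ↔
      (v = bpsi τ (i : ℕ) u ∨ v = bpsi τ (i : ℕ) (bflip (bbit d i) u)) := by
  have hcs : ((i.castSucc : Fin (2*d+1)) : ℕ) = (i : ℕ) := rfl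
  have hsc : ((i.succ : Fin (2*d+1)) : ℕ) = (i : ℕ) + 1 := rfl
  have hlt := i.isLt
  unfold pairAdj
  simp only [hcs, hsc]
  by_cases hd : (i : ℕ) + 1 = d
  · -- middle layer, ψ = τ
    have hb : ((bbit d i : Fin d) : ℕ) = (i : ℕ) := by simp [bbit]; omega
    have hψ : bpsi τ (i : ℕ) = τ := by simp [bpsi, hd]
    rw [hψ]
    constructor
    · rintro ⟨-, (⟨h1, -⟩ | ⟨-, h2⟩ | ⟨h3, -⟩)⟩
      · omega
      · rw [← hb] at h2
        rcases (offdiag_iff _ _ _).1 h2 with h | h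
        · left; rw [← h, Equiv.apply_symm_apply]
        · right; rw [← h, Equiv.apply_symm_apply]
      · omega
    · intro hv
      refine ⟨by trivial, Or.inr (Or.inl ⟨hd, ?_⟩)⟩
      rw [← hb]
      refine (offdiag_iff _ _ _).2 ?_
      rcases hv with rfl | rfl
      · left; rw [Equiv.symm_apply_apply]
      · right; rw [Equiv.symm_apply_apply]
  · have hψ : bpsi τ (i : ℕ) = Equiv.refl _ := by simp [bpsi, hd]
    rw [hψ]
    simp only [Equiv.refl_apply]
    by_cases hlow : (i : ℕ) + 1 < d
    · have hb : ((bbit d i : Fin d) : ℕ) = (i : ℕ) := by simp [bbit]; omega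
      constructor
      · rintro ⟨-, (⟨-, h1⟩ | ⟨h2, -⟩ | ⟨h3, -⟩)⟩
        · rw [← hb] at h1
          exact (offdiag_iff _ _ _).1 h1
        · omega
        · omega
      · intro hv
        refine ⟨by trivial, Or.inl ⟨hlow, ?_⟩⟩
        rw [← hb]
        exact (offdiag_iff _ _ _).2 hv
    · -- right half : d ≤ i
      have hge : d ≤ (i : ℕ) := by omega
      have hb : ((bbit d i : Fin d) : ℕ) = (i : ℕ) - d := by
        simp [bbit]; omega
      constructor
      · rintro ⟨-, (⟨h1, -⟩ | ⟨h2, -⟩ | ⟨-, h3⟩)⟩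
        · omega
        · omega
        · rw [← hb] at h3
          exact (offdiag_iff _ _ _).1 h3
      · intro hv
        refine ⟨by trivial, Or.inr (Or.inr ⟨hge, ?_⟩)⟩
        rw [← hb]
        exact (offdiag_iff _ _ _).2 hv


section Main

variable {d : ℕ} (τ : BStr d ≃ BStr d) (A : Finset (BStr d))
  (P : BStr d → Fin (2*d+1) → BStr d)

/-- set of strings used by the path system on layer `i` -/
def Uset (i : Fin (2*d+1)) : Finset (BStr d) := A.image (fun a => P a i)

/-- the complement matching on layer `i → i+1` -/
def bstep (i : Fin (2*d)) (u : BStr d) : BStr d :=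
  if bpsi τ (i : ℕ) u ∈ Uset A P i.succ then bpsi τ (i : ℕ) (bflip (bbit d i) u)
  else bpsi τ (i : ℕ) u

/-- the complement path system -/
def Qpath (a : BStr d) (i : Fin (2*d+1)) : BStr d :=
  Fin.induction a (fun i prev => bstep τ A P i prev) i

lemma Qpath_zero (a : BStr d) : Qpath τ A P a 0 = a := rfl

lemma Qpath_succ (a : BStr d) (i : Fin (2*d)) :
    Qpath τ A P a i.succ = bstep τ A P i (Qpath τ A P a i.castSucc) := by
  simp [Qpath, Fin.induction_succ]

variable {B : Finset (BStr d)}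

theorem main_lemmas (hP : IsPathSystemOn d (pairAdj d τ) A B P) :
    IsPathSystemOn d (pairAdj d τ) Aᶜ Bᶜ (Qpath τ A P) := by
  obtain ⟨h0, hadj, hB1, hB2, hdisj⟩ := hP
  -- adjacency of P in ψ/flip form
  have hPadj : ∀ a ∈ A, ∀ i : Fin (2*d),
      P a i.succ = bpsi τ (i : ℕ) (P a i.castSucc) ∨
      P a i.succ = bpsi τ (i : ℕ) (bflip (bbit d i) (P a i.castSucc)) := by
    intro a ha i
    exact (adj_iff τ i _ _).1 (hadj a ha i)
  have memU : ∀ (i : Fin (2*d+1)) (u : BStr d),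
      u ∈ Uset A P i ↔ ∃ a ∈ A, P a i = u := by
    intro i u; simp [Uset]
  -- if ψ x is used on layer i+1, its P-predecessor is x or flip x
  have hback : ∀ (i : Fin (2*d)) (x : BStr d),
      bpsi τ (i : ℕ) x ∈ Uset A P i.succ →
      ∃ a ∈ A, P a i.succ = bpsi τ (i : ℕ) x ∧
        (P a i.castSucc = x ∨ P a i.castSucc = bflip (bbit d i) x) := by
    intro i x hx
    obtain ⟨a, ha, hax⟩ := (memU _ _).1 hx
    refine ⟨a, ha, hax, ?_⟩
    rcases hPadj a ha i with h | h
    · left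
      have := h.symm.trans hax
      exact ((bpsi τ (i : ℕ)).injective this)
    · right
      have := h.symm.trans hax
      have h2 := ((bpsi τ (i : ℕ)).injective this)
      rw [← h2, bflip_bflip]
  -- key step lemmas
  have hstep1 : ∀ (i : Fin (2*d)) (u : BStr d), u ∉ Uset A P i.castSucc →
      bstep τ A P i u ∉ Uset A P i.succ := by
    intro i u hu
    unfold bstep
    split_ifs with hc
    · intro hcon
      obtain ⟨a, ha, ha1, hp⟩ := hback i u hc
      obtain ⟨a', ha', ha1', hp'⟩ := hback i (bflip (bbit d i) u) hcon
      have hpa : P a i.castSucc = bflip (bbit d i) u := by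
        rcases hp with h | h
        · exact ((hu ((memU _ _).2 ⟨a, ha, h⟩))).elim
        · exact h
      have hpa' : P a' i.castSucc = bflip (bbit d i) u := by
        rcases hp' with h | h
        · exact h
        · rw [bflip_bflip] at h
          exact ((hu ((memU _ _).2 ⟨a', ha', h⟩))).elim
      have hane : a ≠ a' := by
        intro hh; subst hh
        rw [ha1] at ha1'
        exact bflip_ne (bbit d i) u ((bpsi τ (i:ℕ)).injective ha1'.symm)
      exact hdisj a ha a' ha' hane i.castSucc (hpa.trans hpa'.symm)
    · exact hc
  have hinj : ∀ (i : Fin (2*d)) (u u' : BStr d), u ∉ Uset A P i.castSucc →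
      u' ∉ Uset A P i.castSucc → bstep τ A P i u = bstep τ A P i u' → u = u' := by
    intro i u u' hu hu' heq
    unfold bstep at heq
    split_ifs at heq with c c' c'
    · have h1 := (bpsi τ (i:ℕ)).injective heq
      have h2 := congrArg (bflip (bbit d i)) h1
      rwa [bflip_bflip, bflip_bflip] at h2
    · have h1 := (bpsi τ (i:ℕ)).injective heq
      obtain ⟨a, ha, -, hp⟩ := hback i u c
      rcases hp with h | h
      · exact ((hu ((memU _ _).2 ⟨a, ha, h⟩))).elim
      · rw [h1] at h
        exact ((hu' ((memU _ _).2 ⟨a, ha, h⟩))).elim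
    · have h1 := (bpsi τ (i:ℕ)).injective heq
      obtain ⟨a, ha, -, hp⟩ := hback i u' c'
      rcases hp with h | h
      · exact ((hu' ((memU _ _).2 ⟨a, ha, h⟩))).elim
      · rw [← h1] at h
        exact ((hu ((memU _ _).2 ⟨a, ha, h⟩))).elim
    · exact (bpsi τ (i:ℕ)).injective heq
  have hsurj : ∀ (i : Fin (2*d)) (v : BStr d), v ∉ Uset A P i.succ →
      ∃ u, u ∉ Uset A P i.castSucc ∧ bstep τ A P i u = v := by
    intro i v hv
    set u₀ := (bpsi τ (i:ℕ)).symm v with hu₀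
    have hψu₀ : bpsi τ (i:ℕ) u₀ = v := Equiv.apply_symm_apply _ _
    by_cases h0m : u₀ ∈ Uset A P i.castSucc
    · refine ⟨bflip (bbit d i) u₀, ?_, ?_⟩
      · intro hcon
        obtain ⟨a, ha, hpa⟩ := (memU _ _).1 h0m
        obtain ⟨a', ha', hpa'⟩ := (memU _ _).1 hcon
        have hane : a ≠ a' := by
          intro hh; subst hh
          rw [hpa] at hpa'
          exact bflip_ne (bbit d i) u₀ hpa'.symm
        have hv1 : P a i.succ = bpsi τ (i:ℕ) (bflip (bbit d i) u₀) := by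
          rcases hPadj a ha i with h | h
          · rw [hpa, hψu₀] at h
            exact ((hv ((memU _ _).2 ⟨a, ha, h⟩))).elim
          · rw [hpa] at h; exact h
        have hv2 : P a' i.succ = bpsi τ (i:ℕ) (bflip (bbit d i) u₀) := by
          rcases hPadj a' ha' i with h | h
          · rw [hpa'] at h; exact h
          · rw [hpa', bflip_bflip, hψu₀] at h
            exact ((hv ((memU _ _).2 ⟨a', ha', h⟩))).elim
        exact hdisj a ha a' ha' hane i.succ (hv1.trans hv2.symm)
      · have hused : bpsi τ (i:ℕ) (bflip (bbit d i) u₀) ∈ Uset A P i.succ := by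
          obtain ⟨a, ha, hpa⟩ := (memU _ _).1 h0m
          rcases hPadj a ha i with h | h
          · rw [hpa, hψu₀] at h
            exact ((hv ((memU _ _).2 ⟨a, ha, h⟩))).elim
          · rw [hpa] at h
            exact (memU _ _).2 ⟨a, ha, h⟩
        unfold bstep
        rw [if_pos hused, bflip_bflip, hψu₀]
    · refine ⟨u₀, h0m, ?_⟩
      unfold bstep
      rw [if_neg (hψu₀ ▸ hv), hψu₀]
  -- basic layer facts
  have hU0 : Uset A P 0 = A := by
    ext x
    rw [memU]
    constructor
    · rintro ⟨a, ha, rfl⟩; rw [h0 a ha]; exact ha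
    · intro hx; exact ⟨x, hx, h0 x hx⟩
  have hUlast : Uset A P (Fin.last (2*d)) = B := by
    ext x
    rw [memU]
    constructor
    · rintro ⟨a, ha, rfl⟩; exact hB1 a ha
    · intro hx
      obtain ⟨a, ha, hax⟩ := hB2 x hx
      exact ⟨a, ha, hax⟩
  -- invariant
  have hQU : ∀ a ∉ A, ∀ i : Fin (2*d+1), Qpath τ A P a i ∉ Uset A P i := by
    intro a ha i
    induction i using Fin.induction with
    | zero => rw [Qpath_zero, hU0]; exact ha
    | succ i ih =>
      rw [Qpath_succ]
      exact hstep1 i _ ih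
  have hQsurj : ∀ (i : Fin (2*d+1)) (v : BStr d), v ∉ Uset A P i →
      ∃ a ∉ A, Qpath τ A P a i = v := by
    intro i
    induction i using Fin.induction with
    | zero =>
      intro v hv
      exact ⟨v, by rwa [hU0] at hv, rfl⟩
    | succ i ih =>
      intro v hv
      obtain ⟨u, hu, hstep⟩ := hsurj i v hv
      obtain ⟨a, ha, hq⟩ := ih u hu
      exact ⟨a, ha, by rw [Qpath_succ, hq, hstep]⟩
  refine ⟨?_, ?_, ?_, ?_, ?_⟩
  · intro a _; exact Qpath_zero τ A P a
  · intro a ha i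
    rw [Qpath_succ]
    refine (adj_iff τ i _ _).2 ?_
    unfold bstep
    split_ifs
    · right; rfl
    · left; rfl
  · intro a ha
    rw [Finset.mem_compl]
    rw [Finset.mem_compl] at ha
    have := hQU a ha (Fin.last (2*d))
    rwa [hUlast] at this
  · intro b hb
    rw [Finset.mem_compl] at hb
    obtain ⟨a, ha, hq⟩ := hQsurj (Fin.last (2*d)) b (by rwa [hUlast])
    exact ⟨a, Finset.mem_compl.2 ha, hq⟩
  · intro a ha a' ha' hne i
    rw [Finset.mem_compl] at ha ha'
    induction i using Fin.induction with
    | zero => simpa [Qpath_zero] using hne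
    | succ i ih =>
      rw [Qpath_succ, Qpath_succ]
      intro hcon
      exact ih (hinj i _ _ (hQU a ha i.castSucc) (hQU a' ha' i.castSucc) hcon)

end Main


/-- on a pair of butterflies, if there are node-disjoint paths from
`A` to `B` (with `|A| = |B|`), then there are node-disjoint paths from the
complement `Aᶜ` of the input set to the complement `Bᶜ` of the output set. -/
theorem pair_of_butterflies_complement_routing
    (d : ℕ) (τ : BStr d ≃ BStr d)
    (A B : Finset (BStr d)) (hAB : A.card = B.card)
    (h : ∃ P : BStr d → Fin (2*d+1) → BStr d,
      IsPathSystemOn d (pairAdj d τ) A B P) :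
    ∃ P : BStr d → Fin (2*d+1) → BStr d,
      IsPathSystemOn d (pairAdj d τ) Aᶜ Bᶜ P := by
  obtain ⟨P, hP⟩ := h
  exact ⟨Qpath τ A P, main_lemmas τ A P hP⟩
end

section
/- Let G be a pair of d-dimensional butterflies, A a set of input nodes and B a set of output nodes with |A| = |B|. If there exist |A| node-disjoint directed paths from A to B, then there exists a collection of 2^d node-disjoint directed paths, one starting at each input node and one ending at each output node, such that a path starts at a node of A if and only if it ends at a node of B. -/
def flipb {d : ℕ} (k : Fin d) (b : BStr d) : BStr d := fun j => if j = k then !(b j) else b j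

lemma flipb_apply_ne {d : ℕ} {k j : Fin d} (b : BStr d) (h : j ≠ k) : flipb k b j = b j :=
  if_neg h

lemma flipb_apply_self {d : ℕ} (k : Fin d) (b : BStr d) : flipb k b k = !(b k) :=
  if_pos rfl

lemma flipb_flipb {d : ℕ} (k : Fin d) (b : BStr d) : flipb k (flipb k b) = b := by
  funext j; by_cases h : j = k <;> simp [flipb, h]

lemma flipb_ne {d : ℕ} (k : Fin d) (b : BStr d) : flipb k b ≠ b := by
  intro h
  have := congrFun h k
  simp [flipb] at this

lemma eq_or_flipb {d : ℕ} (k : Fin d) (x t : BStr d) (h : ∀ j, j ≠ k → x j = t j) :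
    x = t ∨ x = flipb k t := by
  by_cases hk : x k = t k
  · left; funext j
    by_cases hj : j = k
    · subst hj; exact hk
    · exact h j hj
  · right; funext j
    by_cases hj : j = k
    · subst hj
      rw [flipb_apply_self]
      cases hx : x j <;> cases ht : t j <;> simp_all
    · rw [flipb_apply_ne _ hj]; exact h j hj

def stageK (d n : ℕ) (hn : n < 2*d) : Fin d :=
  if h : n < d then ⟨n, h⟩ else ⟨n - d, by omega⟩

def stageRho (d : ℕ) (τ : BStr d ≃ BStr d) (n : ℕ) : BStr d ≃ BStr d :=
  if n + 1 = d then τ.symm else Equiv.refl _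

lemma stageK_lt {d n : ℕ} (hn : n < 2*d) (h : n < d) : stageK d n hn = ⟨n, h⟩ := dif_pos h

lemma stageK_ge {d n : ℕ} (hn : n < 2*d) (h : ¬ n < d) :
    stageK d n hn = ⟨n - d, by omega⟩ := dif_neg h

lemma stageRho_eq {d : ℕ} (τ : BStr d ≃ BStr d) {n : ℕ} (h : n + 1 = d) :
    stageRho d τ n = τ.symm := if_pos h

lemma stageRho_ne {d : ℕ} (τ : BStr d ≃ BStr d) {n : ℕ} (h : ¬ (n + 1 = d)) :
    stageRho d τ n = Equiv.refl _ := if_neg h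

noncomputable def stageF (d : ℕ) (τ : BStr d ≃ BStr d) (A : Finset (BStr d))
    (P : BStr d → Fin (2*d+1) → BStr d) (n : ℕ) (b : BStr d) : BStr d :=
  if hn : n < 2*d then
    if hb : ∃ a ∈ A, P a ⟨n, by omega⟩ = b then
      P hb.choose ⟨n+1, by omega⟩
    else
      (stageRho d τ n).symm
        (if (∃ a ∈ A, stageRho d τ n (P a ⟨n+1, by omega⟩) = b) then
          flipb (stageK d n hn) b else b)
  else b

noncomputable def fullG (d : ℕ) (τ : BStr d ≃ BStr d) (A : Finset (BStr d))
    (P : BStr d → Fin (2*d+1) → BStr d) : ℕ → BStr d → BStr d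
  | 0 => id
  | n+1 => fun b => stageF d τ A P n (fullG d τ A P n b)

/-- on a pair of butterflies, node-disjoint paths from `A` to `B`
(with `|A| = |B|`) extend to a full system of `2^d` node-disjoint paths, one
starting at each input node and one ending at each output node, such that a
path starts in `A` iff it ends in `B`. -/
theorem pair_of_butterflies_extend_to_full_routing
    (d : ℕ) (τ : BStr d ≃ BStr d)
    (A B : Finset (BStr d)) (hAB : A.card = B.card)
    (h : ∃ P : BStr d → Fin (2*d+1) → BStr d,
      IsPathSystemOn d (pairAdj d τ) A B P) :
    ∃ P : BStr d → Fin (2*d+1) → BStr d,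
      (∀ a, P a 0 = a) ∧
      (∀ a, ∀ i : Fin (2*d),
        pairAdj d τ (i.castSucc, P a i.castSucc) (i.succ, P a i.succ)) ∧
      (∀ a a', a ≠ a' → ∀ i, P a i ≠ P a' i) ∧
      Function.Bijective (fun a => P a (Fin.last (2*d))) ∧
      (∀ a, a ∈ A ↔ P a (Fin.last (2*d)) ∈ B) := by
  classical
  obtain ⟨P, h0, hadjP, hend, hsur, hdis⟩ := h
  -- each step of an original path stays in its block
  have hstep : ∀ a ∈ A, ∀ (n : ℕ) (hn : n < 2*d), ∀ j : Fin d, j ≠ stageK d n hn →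
      P a ⟨n, by omega⟩ j = stageRho d τ n (P a ⟨n+1, by omega⟩) j := by
    intro a ha n hn j hj
    have H := hadjP a ha ⟨n, hn⟩
    simp only [pairAdj, Fin.castSucc_mk, Fin.succ_mk] at H
    rcases H.2 with ⟨h1, hc⟩ | ⟨h2, hc⟩ | ⟨h3, hc⟩
    · rw [stageRho_ne τ (by omega), Equiv.refl_apply]
      refine hc j fun hjn => hj ?_
      rw [stageK_lt hn (by omega)]
      exact Fin.ext hjn
    · rw [stageRho_eq τ (by omega)]
      refine hc j fun hjn => hj ?_
      rw [stageK_lt hn (by omega)]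
      exact Fin.ext hjn
    · rw [stageRho_ne τ (by omega), Equiv.refl_apply]
      refine hc j fun hjn => hj ?_
      rw [stageK_ge hn (by omega)]
      exact Fin.ext hjn
  have hblock : ∀ a ∈ A, ∀ (n : ℕ) (hn : n < 2*d),
      P a ⟨n, by omega⟩ = stageRho d τ n (P a ⟨n+1, by omega⟩) ∨
      P a ⟨n, by omega⟩ = flipb (stageK d n hn) (stageRho d τ n (P a ⟨n+1, by omega⟩)) :=
    fun a ha n hn => eq_or_flipb _ _ _ (hstep a ha n hn)
  have hfU : ∀ (n : ℕ) (hn : n < 2*d) (b : BStr d)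
      (hb : ∃ a ∈ A, P a ⟨n, by omega⟩ = b),
      stageF d τ A P n b = P hb.choose ⟨n+1, by omega⟩ := by
    intro n hn b hb
    unfold stageF
    rw [dif_pos hn, dif_pos hb]
  have hfN : ∀ (n : ℕ) (hn : n < 2*d) (b : BStr d)
      (hb : ¬ ∃ a ∈ A, P a ⟨n, by omega⟩ = b),
      stageF d τ A P n b = (stageRho d τ n).symm
        (if (∃ a ∈ A, stageRho d τ n (P a ⟨n+1, by omega⟩) = b) then
          flipb (stageK d n hn) b else b) := by
    intro n hn b hb
    unfold stageF
    rw [dif_pos hn, dif_neg hb]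
  have hfA : ∀ a ∈ A, ∀ (n : ℕ) (hn : n < 2*d),
      stageF d τ A P n (P a ⟨n, by omega⟩) = P a ⟨n+1, by omega⟩ := by
    intro a ha n hn
    have hb : ∃ a' ∈ A, P a' ⟨n, by omega⟩ = P a ⟨n, by omega⟩ := ⟨a, ha, rfl⟩
    rw [hfU n hn _ hb]
    have hc : hb.choose = a := by
      by_contra hne
      exact hdis hb.choose hb.choose_spec.1 a ha hne ⟨n, by omega⟩ hb.choose_spec.2
    rw [hc]
  have hfinj : ∀ (n : ℕ), Function.Injective (stageF d τ A P n) := by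
    intro n b b' hbb
    by_cases hn : n < 2*d
    · -- the "used b, unused b'" configuration is impossible
      have hUN : ∀ b b' : BStr d, (∃ a ∈ A, P a ⟨n, by omega⟩ = b) →
          ¬ (∃ a ∈ A, P a ⟨n, by omega⟩ = b') →
          stageF d τ A P n b = stageF d τ A P n b' → False := by
        intro b b' hb hb' hbb
        rw [hfU n hn b hb, hfN n hn b' hb'] at hbb
        have hmem := hb.choose_spec.1
        have hrho := congrArg (stageRho d τ n) hbb.symm
        rw [Equiv.apply_symm_apply] at hrho
        -- hrho : ite _ _ _ = stageRho d τ n (P hb.choose ⟨n+1,_⟩)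
        by_cases hT : ∃ a ∈ A, stageRho d τ n (P a ⟨n+1, by omega⟩) = b'
        · rw [if_pos hT] at hrho
          obtain ⟨a₁, ha₁, hA1⟩ := hT
          have hne01 : hb.choose ≠ a₁ := by
            intro hEq
            rw [hEq, hA1] at hrho
            exact flipb_ne _ b' hrho
          rcases hblock a₁ ha₁ n hn with hB1 | hB1
          · rw [hA1] at hB1
            exact hb' ⟨a₁, ha₁, hB1⟩
          · rw [hA1] at hB1
            rcases hblock hb.choose hmem n hn with hB0 | hB0
            · rw [← hrho] at hB0
              exact hdis hb.choose hmem a₁ ha₁ hne01 ⟨n, by omega⟩ (hB0.trans hB1.symm)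
            · rw [← hrho, flipb_flipb] at hB0
              exact hb' ⟨hb.choose, hmem, hB0⟩
        · rw [if_neg hT] at hrho
          exact hT ⟨hb.choose, hmem, hrho.symm⟩
      by_cases hb : ∃ a ∈ A, P a ⟨n, by omega⟩ = b <;>
        by_cases hb' : ∃ a ∈ A, P a ⟨n, by omega⟩ = b'
      · -- both used
        rw [hfU n hn b hb, hfU n hn b' hb'] at hbb
        have hc : hb.choose = hb'.choose := by
          by_contra hne
          exact hdis hb.choose hb.choose_spec.1 hb'.choose hb'.choose_spec.1 hne
            ⟨n+1, by omega⟩ hbb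
        rw [← hb.choose_spec.2, ← hb'.choose_spec.2, hc]
      · exact absurd hbb (fun hEq => hUN b b' hb hb' hEq)
      · exact absurd hbb.symm (fun hEq => hUN b' b hb' hb hEq)
      · -- both unused
        rw [hfN n hn b hb, hfN n hn b' hb'] at hbb
        have h2 := (stageRho d τ n).symm.injective hbb
        by_cases hT : ∃ a ∈ A, stageRho d τ n (P a ⟨n+1, by omega⟩) = b <;>
          by_cases hT' : ∃ a ∈ A, stageRho d τ n (P a ⟨n+1, by omega⟩) = b'
        · rw [if_pos hT, if_pos hT'] at h2
          have := congrArg (flipb (stageK d n hn)) h2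
          rwa [flipb_flipb, flipb_flipb] at this
        · rw [if_pos hT, if_neg hT'] at h2
          obtain ⟨a₁, ha₁, hA1⟩ := hT
          rcases hblock a₁ ha₁ n hn with hB1 | hB1
          · rw [hA1] at hB1
            exact absurd ⟨a₁, ha₁, hB1⟩ hb
          · rw [hA1, h2] at hB1
            exact absurd ⟨a₁, ha₁, hB1⟩ hb'
        · rw [if_neg hT, if_pos hT'] at h2
          obtain ⟨a₁, ha₁, hA1⟩ := hT'
          rcases hblock a₁ ha₁ n hn with hB1 | hB1
          · rw [hA1] at hB1
            exact absurd ⟨a₁, ha₁, hB1⟩ hb'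
          · rw [hA1, ← h2] at hB1
            exact absurd ⟨a₁, ha₁, hB1⟩ hb
        · rw [if_neg hT, if_neg hT'] at h2
          exact h2
    · unfold stageF at hbb
      rwa [dif_neg hn, dif_neg hn] at hbb
  have hfadj : ∀ (i : Fin (2*d)) (b : BStr d),
      pairAdj d τ (i.castSucc, b) (i.succ, stageF d τ A P i.1 b) := by
    rintro ⟨n, hn⟩ b
    simp only [Fin.castSucc_mk, Fin.succ_mk]
    by_cases hb : ∃ a ∈ A, P a ⟨n, by omega⟩ = b
    · obtain ⟨a0, hmem, heq⟩ := hb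
      subst heq
      rw [hfA a0 hmem n hn]
      exact hadjP a0 hmem ⟨n, hn⟩
    · rw [hfN n hn b hb]
      set m := (if (∃ a ∈ A, stageRho d τ n (P a ⟨n+1, by omega⟩) = b) then
          flipb (stageK d n hn) b else b) with hm
      have hagree : ∀ j : Fin d, j ≠ stageK d n hn → b j = m j := by
        intro j hj
        rw [hm]
        split
        · exact (flipb_apply_ne _ hj).symm
        · rfl
      refine ⟨rfl, ?_⟩
      rcases Nat.lt_trichotomy (n+1) d with h1 | h2 | h3
      · left
        refine ⟨h1, fun j hj => ?_⟩
        rw [stageRho_ne τ (by omega)]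
        simp only [Equiv.refl_symm, Equiv.refl_apply]
        refine hagree j fun hEq => hj ?_
        rw [hEq, stageK_lt hn (by omega)]
      · right; left
        refine ⟨h2, fun j hj => ?_⟩
        rw [stageRho_eq τ h2, Equiv.symm_symm, Equiv.symm_apply_apply]
        refine hagree j fun hEq => hj ?_
        rw [hEq, stageK_lt hn (by omega)]
      · right; right
        refine ⟨(by omega : d ≤ n), fun j hj => ?_⟩
        rw [stageRho_ne τ (by omega)]
        simp only [Equiv.refl_symm, Equiv.refl_apply]
        refine hagree j fun hEq => hj ?_
        rw [hEq, stageK_ge hn (by omega)]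
  have hGinj : ∀ n : ℕ, Function.Injective (fullG d τ A P n) := by
    intro n
    induction n with
    | zero => exact fun x y hxy => hxy
    | succ n ih =>
      intro x y hxy
      exact ih (hfinj n hxy)
  have hcompat : ∀ a ∈ A, ∀ (n : ℕ) (_ : n ≤ 2*d), fullG d τ A P n a = P a ⟨n, by omega⟩ := by
    intro a ha n
    induction n with
    | zero =>
      intro _
      have hz : (⟨0, by omega⟩ : Fin (2*d+1)) = 0 := by
        ext; simp
      rw [hz]
      simpa [fullG] using (h0 a ha).symm
    | succ n ih =>
      intro hn
      have hn' : n < 2*d := by omega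
      calc fullG d τ A P (n+1) a = stageF d τ A P n (fullG d τ A P n a) := rfl
        _ = stageF d τ A P n (P a ⟨n, by omega⟩) := by rw [ih (by omega)]
        _ = P a ⟨n+1, by omega⟩ := hfA a ha n hn'
  refine ⟨fun a i => fullG d τ A P (i : ℕ) a, ?_, ?_, ?_, ?_, ?_⟩
  · intro a
    simp [fullG]
  · intro a i
    simp only [Fin.coe_castSucc, Fin.val_succ, fullG]
    exact hfadj i _
  · intro a a' hne i hEq
    exact hne (hGinj (i : ℕ) hEq)
  · exact Finite.injective_iff_bijective.mp (fun x y hxy => hGinj _ hxy)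
  · intro a
    simp only [Fin.val_last]
    constructor
    · intro ha
      rw [hcompat a ha (2*d) le_rfl]
      exact hend a ha
    · intro hB
      obtain ⟨a', ha', he⟩ := hsur _ hB
      have hEq : fullG d τ A P (2*d) a' = fullG d τ A P (2*d) a := by
        rw [hcompat a' ha' (2*d) le_rfl]
        exact he
      rw [← hGinj (2*d) hEq]
      exact ha'
end

section
/- Let A be any set of input nodes (layer-0 nodes) of a d-dimensional standard butterfly. Then there exists a set of |A| node-disjoint directed edges, one leaving each node of A, such that exactly ⌈|A|/2⌉ of these edges end at layer-1 nodes whose first bit is 0 and exactly ⌊|A|/2⌋ end at layer-1 nodes whose first bit is 1. Likewise there exists such a set with ⌈|A|/2⌉ ending at first bit 1 and ⌊|A|/2⌋ at first bit 0. -/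
lemma butterfly_half_le (s : ℕ) : (s + 1) / 2 ≤ s := by omega

lemma butterfly_arith (s p t n : ℕ) (h1 : t = (s + 1) / 2) (h2 : t ≤ s)
    (h3 : n = s + (p + p)) : t + p = (n + 1) / 2 ∧ (s - t) + p = n / 2 := by omega

lemma butterfly_aux_split (d : ℕ) (hd : 0 < d) (A : Finset (BStr d)) (b : Bool) :
    ∃ f : BStr d → BStr d,
      (∀ a ∈ A, ∀ j : Fin d, (j : ℕ) ≠ 0 → f a j = a j) ∧
      Set.InjOn f ↑A ∧
      (A.filter fun a => f a ⟨0, hd⟩ = b).card = (A.card + 1) / 2 ∧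
      (A.filter fun a => f a ⟨0, hd⟩ = !b).card = A.card / 2 := by
  classical
  set z : Fin d := ⟨0, hd⟩ with hz
  set flip : BStr d → BStr d := fun a => Function.update a z (!(a z)) with hflip
  have hflipz : ∀ a, flip a z = !(a z) := by intro a; simp [hflip]
  have hflipne : ∀ a (j : Fin d), j ≠ z → flip a j = a j := by
    intro a j h; simp [hflip, Function.update, h]
  have hflipflip : ∀ a, flip (flip a) = a := by
    intro a; funext j
    by_cases h : j = z
    · subst h; rw [hflipz, hflipz, Bool.not_not]
    · rw [hflipne _ _ h, hflipne _ _ h]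
  set S : Finset (BStr d) := A.filter (fun a => flip a ∉ A) with hS
  set P : Finset (BStr d) := A.filter (fun a => flip a ∈ A) with hP
  have hUnion : S ∪ P = A := by
    ext a; simp only [Finset.mem_union, hS, hP, Finset.mem_filter]; tauto
  have hDisj : Disjoint S P := by
    rw [Finset.disjoint_left]
    intro a haS haP
    simp only [hS, hP, Finset.mem_filter] at haS haP
    exact haS.2 haP.2
  -- the two halves of P have equal size
  have hpf : (P.filter fun a => a z = false).card = (P.filter fun a => a z = true).card := by
    apply Finset.card_bij (fun a _ => flip a)
    · intro a ha
      simp only [Finset.mem_filter, hP] at ha ⊢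
      refine ⟨⟨ha.1.2, ?_⟩, ?_⟩
      · rw [hflipflip]; exact ha.1.1
      · rw [hflipz, ha.2]; rfl
    · intro a ha a' ha' h
      have := congrArg flip h
      rwa [hflipflip, hflipflip] at this
    · intro a ha
      simp only [Finset.mem_filter, hP] at ha
      refine ⟨flip a, ?_, by rw [hflipflip]⟩
      simp only [Finset.mem_filter, hP]
      exact ⟨⟨ha.1.2, by rw [hflipflip]; exact ha.1.1⟩, by rw [hflipz, ha.2]; rfl⟩
  have hPsplit : P.card = (P.filter fun a => a z = false).card
      + (P.filter fun a => a z = true).card := by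
    rw [← Finset.card_filter_add_card_filter_not (p := fun a => a z = false)]
    have : (P.filter fun a => ¬ a z = false) = P.filter fun a => a z = true :=
      Finset.filter_congr (by intro a _; cases h : a z <;> simp [h])
    rw [this]
  have hPb : ∀ c : Bool, (P.filter fun a => a z = c).card
      = (P.filter fun a => a z = false).card := by
    intro c; cases c
    · rfl
    · exact hpf.symm
  have hAcard : A.card = S.card + P.card := by
    rw [← hUnion, Finset.card_union_of_disjoint hDisj]
  obtain ⟨T, hTS, hTcard⟩ := Finset.exists_subset_card_eq
    (butterfly_half_le S.card)
  set f : BStr d → BStr d :=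
    fun a => Function.update a z (if a ∈ T then b else if a ∈ S then !b else a z) with hf
  have hfne : ∀ a (j : Fin d), j ≠ z → f a j = a j := by
    intro a j h; simp [hf, Function.update, h]
  have hfz : ∀ a, f a z = if a ∈ T then b else if a ∈ S then !b else a z := by
    intro a; simp [hf]
  -- counting lemmas
  have hSb : S.filter (fun a => f a z = b) = T := by
    ext a
    simp only [Finset.mem_filter, hfz]
    constructor
    · rintro ⟨haS, hval⟩
      by_cases h : a ∈ T
      · exact h
      · rw [if_neg h, if_pos haS] at hval; simp at hval
    · intro h
      exact ⟨hTS h, by rw [if_pos h]⟩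
  have hSnb : S.filter (fun a => f a z = !b) = S \ T := by
    ext a
    simp only [Finset.mem_filter, Finset.mem_sdiff, hfz]
    constructor
    · rintro ⟨haS, hval⟩
      refine ⟨haS, fun h => ?_⟩
      rw [if_pos h] at hval; simp at hval
    · rintro ⟨haS, haT⟩
      exact ⟨haS, by rw [if_neg haT, if_pos haS]⟩
  have hPc : ∀ c : Bool, P.filter (fun a => f a z = c) = P.filter (fun a => a z = c) := by
    intro c
    apply Finset.filter_congr
    intro a haP
    have haS : a ∉ S := Finset.disjoint_right.mp hDisj haP
    have haT : a ∉ T := fun h => haS (hTS h)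
    rw [hfz, if_neg haT, if_neg haS]
  have hsplit : ∀ c : Bool, (A.filter fun a => f a z = c).card
      = (S.filter fun a => f a z = c).card + (P.filter fun a => f a z = c).card := by
    intro c
    rw [← hUnion, Finset.filter_union,
      Finset.card_union_of_disjoint (Finset.disjoint_filter_filter hDisj)]
  have hTle : T.card ≤ S.card := Finset.card_le_card hTS
  have hcb : (A.filter fun a => f a z = b).card = (A.card + 1) / 2 := by
    rw [hsplit b, hSb, hPc b, hPb b]
    exact (butterfly_arith S.card _ T.card A.card hTcard hTle (by rw [hAcard, hPsplit, hpf])).1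
  have hcnb : (A.filter fun a => f a z = !b).card = A.card / 2 := by
    rw [hsplit (!b), hSnb, Finset.card_sdiff_of_subset hTS, hPc (!b), hPb (!b)]
    exact (butterfly_arith S.card _ T.card A.card hTcard hTle (by rw [hAcard, hPsplit, hpf])).2
  refine ⟨f, ?_, ?_, hcb, hcnb⟩
  · intro a _ j hj
    exact hfne a j (by intro h; apply hj; rw [h])
  · -- injectivity
    intro a ha a' ha' hEq
    rw [Finset.mem_coe] at ha ha'
    have hrest : ∀ j : Fin d, j ≠ z → a j = a' j := by
      intro j hj
      have := congrFun hEq j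
      rwa [hfne a j hj, hfne a' j hj] at this
    by_cases hb : a z = a' z
    · funext j
      by_cases hjz : j = z
      · subst hjz; exact hb
      · exact hrest j hjz
    · exfalso
      have ha'flip : a' = flip a := by
        funext j
        by_cases hjz : j = z
        · subst hjz
          rw [hflipz]
          cases h1 : a z <;> cases h2 : a' z <;> simp_all
        · rw [hflipne _ _ hjz, hrest j hjz]
      have hfa : flip a ∈ A := ha'flip ▸ ha'
      have hfa' : flip a' ∈ A := by rw [ha'flip, hflipflip]; exact ha
      have haS : a ∉ S := by simp only [hS, Finset.mem_filter]; tauto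
      have ha'S : a' ∉ S := by simp only [hS, Finset.mem_filter]; tauto
      have haT : a ∉ T := fun h => haS (hTS h)
      have ha'T : a' ∉ T := fun h => ha'S (hTS h)
      have := congrFun hEq z
      rw [hfz, hfz, if_neg haT, if_neg haS, if_neg ha'T, if_neg ha'S] at this
      exact hb this

/-- in a `d`-dimensional standard butterfly (`d ≥ 1`), for any set
`A` of input nodes there is a set of `|A|` node-disjoint edges from layer `0`
to layer `1`, one leaving each node of `A` (the head `f a` of the edge leaving
`a` agrees with `a` except possibly in bit `0`; node-disjointness means the
heads are pairwise distinct), with exactly `⌈|A|/2⌉` heads having first bit `0`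
and `⌊|A|/2⌋` heads having first bit `1`; and likewise with the roles of the
two first-bit values exchanged. -/
theorem butterfly_first_layer_splitting
    (d : ℕ) (hd : 0 < d) (A : Finset (BStr d)) :
    (∃ f : BStr d → BStr d,
      (∀ a ∈ A, ∀ j : Fin d, (j : ℕ) ≠ 0 → f a j = a j) ∧
      Set.InjOn f ↑A ∧
      (A.filter fun a => f a ⟨0, hd⟩ = false).card = (A.card + 1) / 2 ∧
      (A.filter fun a => f a ⟨0, hd⟩ = true).card = A.card / 2) ∧
    (∃ f : BStr d → BStr d,
      (∀ a ∈ A, ∀ j : Fin d, (j : ℕ) ≠ 0 → f a j = a j) ∧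
      Set.InjOn f ↑A ∧
      (A.filter fun a => f a ⟨0, hd⟩ = true).card = (A.card + 1) / 2 ∧
      (A.filter fun a => f a ⟨0, hd⟩ = false).card = A.card / 2) := by
  constructor
  · simpa using butterfly_aux_split d hd A false
  · simpa using butterfly_aux_split d hd A true
end

section
/- Let A be a set of input nodes of a d-dimensional standard butterfly with |A| = 2^m for some m ≤ d. Then there exist 2^m node-disjoint directed paths, one starting at each node of A and each ending on layer m, such that for each of the 2^m binary strings x of length m exactly one path ends at a layer-m node whose first m bits equal x. -/
lemma exists_split {α γ : Type*} [DecidableEq γ] :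
    ∀ (n : ℕ) (S : Finset α) (c : α → γ), S.card = n →
    (∀ x ∈ S, (S.filter (fun y => c y = c x)).card ≤ 2) →
    ∃ g : α → Bool,
      (∀ x ∈ S, ∀ y ∈ S, x ≠ y → c x = c y → g x ≠ g y) ∧
      2 * (S.filter (fun x => g x = true)).card ≤ S.card ∧
      S.card ≤ 2 * (S.filter (fun x => g x = true)).card + 1 := by
  classical
  intro n
  induction n using Nat.strong_induction_on with
  | _ n ih =>
    intro S c hn hc
    rcases S.eq_empty_or_nonempty with rfl | ⟨x, hx⟩
    · exact ⟨fun _ => false, by simp, by simp⟩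
    set cls := S.filter (fun y => c y = c x) with hcls
    have hxcls : x ∈ cls := by simp [hcls, hx]
    have hclsne : cls.Nonempty := ⟨x, hxcls⟩
    set S' := S.filter (fun y => ¬ c y = c x) with hS'
    have hunion : S = cls ∪ S' := by
      ext z; simp only [hcls, hS', Finset.mem_union, Finset.mem_filter]; tauto
    have hdisj : Disjoint cls S' := Finset.disjoint_filter_filter_not S S _
    have hcard : S.card = cls.card + S'.card := by
      rw [hunion, Finset.card_union_of_disjoint hdisj]
    have hS'sub : S' ⊆ S := Finset.filter_subset _ _
    have hS'lt : S'.card < n := by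
      have := hclsne.card_pos; omega
    have hc' : ∀ y ∈ S', (S'.filter (fun z => c z = c y)).card ≤ 2 := by
      intro y hy
      refine le_trans (Finset.card_le_card ?_) (hc y (hS'sub hy))
      exact Finset.filter_subset_filter _ hS'sub
    obtain ⟨g', hg1, hg2, hg3⟩ := ih S'.card hS'lt S' c rfl hc'
    have hxS' : x ∉ S' := by simp [hS']
    have hmemS' : ∀ z ∈ S, z ≠ x → c z ≠ c x → z ∈ S' := by
      intro z hz _ hcz; simp [hS', hz, hcz]
    have hcls2 := hc x hx
    rw [← hcls] at hcls2
    set t := (S'.filter (fun z => g' z = true)).card with ht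
    interval_cases h : cls.card
    · exact absurd (Finset.card_eq_zero.mp h ▸ hxcls) (Finset.notMem_empty x)
    · -- singleton class
      have hcx : ∀ z ∈ S, c z = c x → z = x := by
        intro z hz hcz
        have hzcls : z ∈ cls := by simp [hcls, hz, hcz]
        obtain ⟨a, ha⟩ := Finset.card_eq_one.mp h
        rw [ha, Finset.mem_singleton] at hzcls hxcls
        rw [hzcls, hxcls]
      have hSins : S = insert x S' := by
        rw [hunion]
        have : cls = {x} := Finset.eq_singleton_iff_unique_mem.mpr
          ⟨hxcls, fun z hz => hcx z (by rw [hunion]; exact Finset.mem_union_left _ hz)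
            ((Finset.mem_filter.mp hz).2)⟩
        rw [this]; rfl
      set b : Bool := decide (S'.card = 2 * t + 1) with hb
      refine ⟨fun z => if z = x then b else g' z, ?_, ?_, ?_⟩
      · intro u hu v hv huv hcuv
        by_cases hux : u = x
        · subst hux
          exact absurd (hcx v hv hcuv.symm).symm huv
        by_cases hvx : v = x
        · subst hvx
          exact absurd (hcx u hu hcuv) hux
        have hu' : u ∈ S' := hmemS' u hu hux (fun hh => hux (hcx u hu hh))
        have hv' : v ∈ S' := hmemS' v hv hvx (fun hh => hvx (hcx v hv hh))
        simpa [hux, hvx] using hg1 u hu' v hv' huv hcuv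
      all_goals {
        have hfe : S'.filter (fun z => (if z = x then b else g' z) = true)
            = S'.filter (fun z => g' z = true) := by
          apply Finset.filter_congr
          intro z hz
          have h1 : z ≠ x := fun hh => hxS' (hh ▸ hz)
          simp [h1]
        rw [hSins, Finset.filter_insert]
        by_cases hodd : S'.card = 2 * t + 1
        · have hbt : b = true := by simp [hb, hodd]
          rw [if_pos (by simp [hbt]), Finset.card_insert_of_notMem
            (fun hh => hxS' (Finset.mem_filter.mp hh).1), hfe]
          simp only [Finset.card_insert_of_notMem hxS', ← ht]
          omega
        · have hev : S'.card = 2 * t := by omega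
          have hbt : b = false := by simp [hb, hodd]
          rw [if_neg (by simp [hbt]), hfe]
          simp only [Finset.card_insert_of_notMem hxS', ← ht]
          omega
      }
    · -- class of size two
      obtain ⟨u, v, huv, hcuv⟩ := Finset.card_eq_two.mp h
      have hxuv : x = u ∨ x = v := by
        rw [hcuv] at hxcls; simpa using hxcls
      obtain ⟨y, hyx, hclsxy⟩ : ∃ y, y ≠ x ∧ cls = {x, y} := by
        rcases hxuv with rfl | rfl
        · exact ⟨v, fun hh => huv hh.symm, hcuv⟩
        · exact ⟨u, fun hh => huv hh, by rw [hcuv, Finset.pair_comm]⟩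
      have hycls : y ∈ cls := by rw [hclsxy]; simp
      have hyS : y ∈ S := (Finset.filter_subset _ _) hycls
      have hcy : c y = c x := (Finset.mem_filter.mp hycls).2
      have hyS' : y ∉ S' := by simp [hS', hcy]
      have hclsmem : ∀ z ∈ S, c z = c x → z = x ∨ z = y := by
        intro z hz hcz
        have : z ∈ cls := by simp [hcls, hz, hcz]
        rw [hclsxy] at this; simpa using this
      have hSins : S = insert x (insert y S') := by
        rw [hunion, hclsxy]
        ext z; simp
      refine ⟨fun z => if z = x then true else if z = y then false else g' z, ?_, ?_, ?_⟩
      · intro p hp q hq hpq hcpq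
        have key : ∀ z ∈ S, c z ≠ c x → z ∈ S' := by
          intro z hz hh
          exact hmemS' z hz (fun he => hh (he ▸ rfl)) hh
        by_cases hcp : c p = c x
        · have hcq : c q = c x := hcpq.symm.trans hcp
          rcases hclsmem p hp hcp with rfl | rfl <;>
            rcases hclsmem q hq hcq with rfl | rfl
          · exact absurd rfl hpq
          · simp [hyx, hyx.symm]
          · simp [hyx, hyx.symm]
          · exact absurd rfl hpq
        · have hcq : c q ≠ c x := fun hh => hcp (hcpq.trans hh)
          have hp' : p ∈ S' := key p hp hcp
          have hq' : q ∈ S' := key q hq hcq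
          have hpx : p ≠ x := fun hh => hcp (hh ▸ rfl)
          have hqx : q ≠ x := fun hh => hcq (hh ▸ rfl)
          have hpy : p ≠ y := fun hh => hcp (hh ▸ hcy)
          have hqy : q ≠ y := fun hh => hcq (hh ▸ hcy)
          simpa [hpx, hqx, hpy, hqy] using hg1 p hp' q hq' hpq hcpq
      all_goals {
        have hfe : S'.filter (fun z => (if z = x then true else if z = y then false else g' z) = true)
            = S'.filter (fun z => g' z = true) := by
          apply Finset.filter_congr
          intro z hz
          have h1 : z ≠ x := fun hh => hxS' (hh ▸ hz)
          have h2 : z ≠ y := fun hh => hyS' (hh ▸ hz)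
          simp [h1, h2]
        have hxins : x ∉ insert y S' := by simp [hyx.symm, hxS']
        rw [hSins, Finset.filter_insert, if_pos (by simp [hyx.symm]),
          Finset.filter_insert, if_neg (by simp [hyx]), hfe,
          Finset.card_insert_of_notMem (fun hh => hxins
            (Finset.mem_insert_of_mem (Finset.mem_filter.mp hh).1))]
        simp only [Finset.card_insert_of_notMem hxins,
          Finset.card_insert_of_notMem hyS', ← ht]
        omega
      }

set_option maxHeartbeats 1000000 in
open Classical in
/-- in a `d`-dimensional standard butterfly, given a set `A` of
input nodes with `|A| = 2^m` (`m ≤ d`), there are `2^m` node-disjoint directed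
paths, one starting at each node of `A` and ending on layer `m` (recorded by
the string `P a i` visited on each layer `i ≤ m`; the edge from layer `i` to
layer `i+1` may change only bit `i`), such that for each binary string `x` of
length `m` exactly one path ends at a layer-`m` node whose first `m` bits
equal `x`. -/
theorem butterfly_split_to_all_prefixes
    (d m : ℕ) (hm : m ≤ d) (A : Finset (BStr d)) (hA : A.card = 2 ^ m) :
    ∃ P : BStr d → ℕ → BStr d,
      (∀ a ∈ A, P a 0 = a) ∧
      (∀ a ∈ A, ∀ i < m, ∀ j : Fin d, (j : ℕ) ≠ i → P a i j = P a (i + 1) j) ∧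
      (∀ a ∈ A, ∀ a' ∈ A, a ≠ a' → ∀ i ≤ m, P a i ≠ P a' i) ∧
      (∀ x : Fin m → Bool, ∃! a : BStr d, a ∈ A ∧
        ∀ t : Fin m, P a m (Fin.castLE hm t) = x t) := by
  classical
  have key : ∀ i, i ≤ m → ∃ f : ℕ → BStr d → BStr d,
      (∀ a, f 0 a = a) ∧
      (∀ a ∈ A, ∀ k < i, ∀ j : Fin d, (j : ℕ) ≠ k → f k a j = f (k + 1) a j) ∧
      (∀ k ≤ i, ∀ a ∈ A, ∀ j : Fin d, k ≤ (j : ℕ) → f k a j = a j) ∧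
      (∀ k ≤ i, ∀ a ∈ A, ∀ a' ∈ A, a ≠ a' → f k a ≠ f k a') ∧
      (∀ p : BStr d,
        (A.filter (fun a => ∀ j : Fin d, (j : ℕ) < i → f i a j = p j)).card
          = 2 ^ (m - i)) := by
    intro i
    induction i with
    | zero =>
      intro _
      refine ⟨fun _ a => a, fun a => rfl, ?_, ?_, ?_, ?_⟩
      · intro a _ k hk; omega
      · intro k hk a _ j _; interval_cases k; rfl
      · intro k hk a ha a' ha' hne; interval_cases k; exact fun hh => hne hh
      · intro p
        rw [Finset.filter_true_of_mem (fun a _ => fun j hj => absurd hj (by omega))]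
        simpa using hA
    | succ i IH =>
      intro hi1
      have hi : i ≤ m := Nat.le_of_succ_le hi1
      obtain ⟨f, hf0, hf1, hf2, hf3, hf4⟩ := IH hi
      have hid : i < d := lt_of_lt_of_le hi1 hm
      set ii : Fin d := ⟨i, hid⟩ with hii
      have hiv : (ii : ℕ) = i := rfl
      set π : BStr d → BStr d := fun a j => if (j : ℕ) < i then f i a j else false with hπ
      set F : BStr d → Finset (BStr d) :=
        fun p => A.filter (fun a => ∀ j : Fin d, (j : ℕ) < i → f i a j = p j) with hF
      set c : BStr d → BStr d := fun a => Function.update (f i a) ii false with hc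
      have hcoff : ∀ a a', c a = c a' → ∀ j : Fin d, j ≠ ii → f i a j = f i a' j := by
        intro a a' hca j hj
        have := congrFun hca j
        simpa [hc, Function.update_of_ne hj] using this
      have hclassbound : ∀ p, ∀ x ∈ F p, ((F p).filter (fun y => c y = c x)).card ≤ 2 := by
        intro p x hx
        have h2 : ((F p).filter (fun y => c y = c x)).card
            ≤ (Finset.univ : Finset Bool).card := by
          apply Finset.card_le_card_of_injOn (fun y => f i y ii)
          · intro y _; exact Finset.mem_univ _
          · intro y hy y' hy' hval
            simp only [Finset.coe_filter, Set.mem_setOf_eq] at hy hy'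
            have hyA : y ∈ A := (Finset.mem_filter.mp hy.1).1
            have hy'A : y' ∈ A := (Finset.mem_filter.mp hy'.1).1
            by_contra hne
            apply hf3 i le_rfl y hyA y' hy'A hne
            funext j
            by_cases hji : j = ii
            · rw [hji]; exact hval
            · exact hcoff y y' (hy.2.trans hy'.2.symm) j hji
        simpa using h2
      choose g hg1 hg2 hg3 using fun p => exists_split (F p).card (F p) c rfl (hclassbound p)
      set G : BStr d → Bool := fun a => g (π a) a with hG
      set f' : ℕ → BStr d → BStr d :=
        fun k => if k = i + 1 then (fun a => Function.update (f i a) ii (G a)) else f k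
        with hf'
      have hf'lt : ∀ k, k ≠ i + 1 → f' k = f k := by
        intro k hk; simp [hf', hk]
      have hf'top : ∀ a, f' (i + 1) a = Function.update (f i a) ii (G a) := by
        intro a; simp [hf']
      have haF : ∀ a ∈ A, a ∈ F (π a) := by
        intro a ha
        simp only [hF, Finset.mem_filter]
        exact ⟨ha, fun j hj => by simp [hπ, hj]⟩
      have hπeq : ∀ a ∈ A, ∀ b ∈ A, (∀ j : Fin d, (j : ℕ) < i → f i a j = f i b j) →
          π a = π b := by
        intro a _ b _ hab
        funext j
        by_cases hj : (j : ℕ) < i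
        · simp [hπ, hj, hab j hj]
        · simp [hπ, hj]
      refine ⟨f', ?_, ?_, ?_, ?_, ?_⟩
      · intro a; rw [hf'lt 0 (by omega)]; exact hf0 a
      · intro a ha k hk j hj
        rcases Nat.lt_succ_iff_lt_or_eq.mp hk with hk' | rfl
        · rw [hf'lt k (by omega), hf'lt (k + 1) (by omega)]
          exact hf1 a ha k hk' j hj
        · rw [hf'lt k (by omega), hf'top]
          have hjii : j ≠ ii := fun hh => hj (by rw [hh])
          rw [Function.update_of_ne hjii]
      · intro k hk a ha j hjk
        rcases Nat.lt_succ_iff_lt_or_eq.mp (Nat.lt_succ_of_le hk) with hk' | rfl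
        · rw [hf'lt k (by omega)]; exact hf2 k (by omega) a ha j hjk
        · rw [hf'top]
          have hjii : j ≠ ii := by
            intro hh; rw [hh] at hjk; omega
          rw [Function.update_of_ne hjii]
          exact hf2 i le_rfl a ha j (by omega)
      · intro k hk a ha a' ha' hne
        rcases Nat.lt_succ_iff_lt_or_eq.mp (Nat.lt_succ_of_le hk) with hk' | rfl
        · rw [hf'lt k (by omega)]; exact hf3 k (by omega) a ha a' ha' hne
        · rw [hf'top, hf'top]
          intro heq
          have hoff : ∀ j : Fin d, j ≠ ii → f i a j = f i a' j := by
            intro j hj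
            have := congrFun heq j
            rwa [Function.update_of_ne hj, Function.update_of_ne hj] at this
          have hππ : π a = π a' := hπeq a ha a' ha' (fun j hj =>
            hoff j (fun hh => by rw [hh] at hj; omega))
          have hca : c a = c a' := by
            funext j
            by_cases hji : j = ii
            · rw [hji]; simp [hc]
            · simp only [hc]
              rw [Function.update_of_ne hji, Function.update_of_ne hji]
              exact hoff j hji
          have haFa := haF a ha
          have haFa' : a' ∈ F (π a) := by rw [hππ]; exact haF a' ha'
          have hGne := hg1 (π a) a haFa a' haFa' hne hca
          have hGeq : G a = G a' := by
            have := congrFun heq ii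
            simpa [Function.update_self] using this
          simp only [hG] at hGeq
          rw [← hππ] at hGeq
          exact hGne hGeq
      · intro p
        set q : BStr d := fun j => if (j : ℕ) < i then p j else false with hq
        have hsplit : A.filter (fun a => ∀ j : Fin d, (j : ℕ) < i + 1 → f' (i + 1) a j = p j)
            = (F q).filter (fun a => G a = p ii) := by
          ext a
          simp only [Finset.mem_filter, hF]
          constructor
          · rintro ⟨ha, hcond⟩
            refine ⟨⟨ha, fun j hj => ?_⟩, ?_⟩
            · have hjii : j ≠ ii := by
                intro hh; rw [hh] at hj; omega
              have := hcond j (by omega)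
              rw [hf'top, Function.update_of_ne hjii] at this
              rw [this]; simp [hq, hj]
            · have := hcond ii (by omega)
              rw [hf'top, Function.update_self] at this
              exact this
          · rintro ⟨⟨ha, hcond⟩, hGa⟩
            refine ⟨ha, fun j hj => ?_⟩
            by_cases hji : j = ii
            · rw [hji, hf'top, Function.update_self]
              exact hGa
            · have hjlt : (j : ℕ) < i := by
                have : (j : ℕ) ≠ i := fun hh => hji (Fin.ext hh)
                omega
              rw [hf'top, Function.update_of_ne hji]
              have := hcond j hjlt
              rw [this]; simp [hq, hjlt]
        have hπq : ∀ a ∈ F q, π a = q := by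
          intro a haq
          simp only [hF, Finset.mem_filter] at haq
          funext j
          by_cases hj : (j : ℕ) < i
          · simp only [hπ, if_pos hj]
            exact haq.2 j hj
          · simp [hπ, hq, hj]
        have hGq : (F q).filter (fun a => G a = p ii) = (F q).filter (fun a => g q a = p ii) := by
          apply Finset.filter_congr
          intro a haq
          simp only [hG, hπq a haq]
        have hcardF : (F q).card = 2 ^ (m - i) := hf4 q
        have hpow : 2 ^ (m - i) = 2 * 2 ^ (m - (i + 1)) := by
          rw [← pow_succ']
          congr 1
          omega
        have ht2 := hg2 q
        have ht3 := hg3 q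
        rw [hcardF, hpow] at ht2 ht3
        set t := ((F q).filter (fun x => g q x = true)).card with htt
        have htval : t = 2 ^ (m - (i + 1)) := by omega
        rw [hsplit, hGq]
        cases hpii : p ii
        · have hcompl : ((F q).filter (fun a => g q a = false)).card
              = (F q).card - t := by
            have h1 := Finset.card_filter_add_card_filter_not
              (s := F q) (p := fun a => g q a = true)
            have h2 : (F q).filter (fun a => ¬ g q a = true)
                = (F q).filter (fun a => g q a = false) := by
              apply Finset.filter_congr
              intro a _
              simp
            rw [h2] at h1
            omega
          rw [hcompl, hcardF, hpow]
          omega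
        · exact htval
  obtain ⟨f, hf0, hf1, hf2, hf3, hf4⟩ := key m le_rfl
  refine ⟨fun a k => f k a, fun a ha => hf0 a, hf1, ?_, ?_⟩
  · intro a ha a' ha' hne k hk
    exact hf3 k hk a ha a' ha' hne
  · intro x
    set p : BStr d := fun j => if h : (j : ℕ) < m then x ⟨j, h⟩ else false with hp
    have hcard := hf4 p
    rw [Nat.sub_self, pow_zero] at hcard
    obtain ⟨a, haeq⟩ := Finset.card_eq_one.mp hcard
    have hamem : a ∈ A.filter (fun a => ∀ j : Fin d, (j : ℕ) < m → f m a j = p j) := by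
      rw [haeq]; exact Finset.mem_singleton_self a
    rw [Finset.mem_filter] at hamem
    refine ⟨a, ⟨hamem.1, fun t => ?_⟩, ?_⟩
    · have ht : ((Fin.castLE hm t : Fin d) : ℕ) < m := by
        simp [Fin.castLE]
      have := hamem.2 (Fin.castLE hm t) ht
      exact this.trans (by simp [hp, ht])
    · intro b hb
      have hbmem : b ∈ A.filter (fun a => ∀ j : Fin d, (j : ℕ) < m → f m a j = p j) := by
        rw [Finset.mem_filter]
        refine ⟨hb.1, fun j hj => ?_⟩
        have hcast : Fin.castLE hm ⟨(j : ℕ), hj⟩ = j := by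
          apply Fin.ext; rfl
        have h5 := hb.2 ⟨(j : ℕ), hj⟩
        rw [hcast] at h5
        exact h5.trans (by simp [hp, hj])
      rw [haeq, Finset.mem_singleton] at hbmem
      exact hbmem
end

section
/- Let A be any set of input nodes of a d-dimensional standard butterfly and let k ≤ d. Then there exist |A| node-disjoint directed paths, one starting at each node of A and each ending on layer k, such that for every binary string x of length j < k, if p of the paths pass through a layer-j node whose first j bits equal x, then ⌈p/2⌉ of them pass through a layer-(j+1) node with first j+1 bits equal to one of x0, x1 and ⌊p/2⌋ pass through a layer-(j+1) node with first j+1 bits equal to the other. -/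
namespace BF

def enc {n : ℕ} (f : Fin n → Bool) : ℕ := ∑ t : Fin n, cond (f t) (2 ^ (t : ℕ)) 0

lemma enc_succ {n : ℕ} (f : Fin (n+1) → Bool) :
    enc f = (cond (f 0) 1 0) + 2 * enc (fun i : Fin n => f i.succ) := by
  unfold enc
  rw [Fin.sum_univ_succ, Finset.mul_sum]
  have h1 : ∀ i : Fin n, (cond (f i.succ) (2 ^ ((i.succ : Fin (n+1)) : ℕ)) 0)
      = 2 * cond (f i.succ) (2 ^ (i : ℕ)) 0 := by
    intro i
    cases f i.succ <;> simp [pow_succ, mul_comm]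
  rw [Finset.sum_congr rfl (fun i _ => h1 i)]
  cases f 0 <;> simp

lemma enc_inj : ∀ {n : ℕ} (f g : Fin n → Bool), enc f = enc g → f = g := by
  intro n
  induction n with
  | zero => intro f g _; funext t; exact absurd t.2 (by omega)
  | succ n ih =>
    intro f g h
    rw [enc_succ, enc_succ] at h
    have h0 : f 0 = g 0 := by
      cases hf : f 0 <;> cases hg : g 0 <;> simp [hf, hg] at h ⊢ <;> omega
    have ht : (fun i : Fin n => f i.succ) = (fun i : Fin n => g i.succ) := by
      apply ih
      cases hf : f 0 <;> cases hg : g 0 <;> simp [hf, hg] at h h0 ⊢ <;> omega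
    funext t
    rcases Fin.eq_zero_or_eq_succ t with rfl | ⟨i, rfl⟩
    · exact h0
    · exact congrFun ht i

variable (d : ℕ) (A : Finset (BStr d))

/-- sort key within a layer-`j` group. -/
def keyv (j : ℕ) (F : BStr d → BStr d) (a : BStr d) : ℕ :=
  2 * enc (fun t : Fin d => decide (j < (t : ℕ)) && F a t) +
    (if h : j < d then cond (F a ⟨j, h⟩) 1 0 else 0)

/-- the group of `a` at layer `j` : members of `A` whose layer-`j` string
agrees with that of `a` on the first `j` bits. -/
def grp (j : ℕ) (F : BStr d → BStr d) (a : BStr d) : Finset (BStr d) :=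
  A.filter fun a' => ∀ t : Fin d, (t : ℕ) < j → F a' t = F a t

/-- rank of `a` within a finset by key. -/
def rnk (G : Finset (BStr d)) (j : ℕ) (F : BStr d → BStr d) (a : BStr d) : ℕ :=
  (G.filter fun a' => keyv d j F a' < keyv d j F a).card

/-- the next bit of the path of `a` going from layer `j` to layer `j+1`. -/
def nb (j : ℕ) (F : BStr d → BStr d) (a : BStr d) : Bool :=
  decide ((rnk d (grp d A j F a) j F a) % 2 = 1)

/-- layer-`i` strings of all the paths. -/
def Pf : ℕ → BStr d → BStr d
  | 0 => fun a => a
  | (j+1) => fun a =>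
      if h : j < d then
        Function.update (Pf j a) ⟨j, h⟩ (nb d A j (Pf j) a)
      else Pf j a

/-- keys determine strings within a group. -/
lemma keyv_eq_of (j : ℕ) (F : BStr d → BStr d) {a a' : BStr d}
    (hpre : ∀ t : Fin d, (t : ℕ) < j → F a t = F a' t)
    (h : keyv d j F a = keyv d j F a') : F a = F a' := by
  unfold keyv at h
  have hYa : (if h : j < d then cond (F a ⟨j, h⟩) 1 0 else 0) ≤ 1 := by
    split
    · cases F a ⟨j, by assumption⟩ <;> simp
    · simp
  have hYa' : (if h : j < d then cond (F a' ⟨j, h⟩) 1 0 else 0) ≤ 1 := by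
    split
    · cases F a' ⟨j, by assumption⟩ <;> simp
    · simp
  have hX : enc (fun t : Fin d => decide (j < (t : ℕ)) && F a t)
      = enc (fun t : Fin d => decide (j < (t : ℕ)) && F a' t) := by omega
  have hY : (if h : j < d then cond (F a ⟨j, h⟩) 1 0 else 0)
      = (if h : j < d then cond (F a' ⟨j, h⟩) 1 0 else 0) := by omega
  have hmask := enc_inj _ _ hX
  funext t
  rcases lt_trichotomy (t : ℕ) j with hlt | heq | hgt
  · exact hpre t hlt
  · have hjd : j < d := heq ▸ t.2
    rw [dif_pos hjd, dif_pos hjd] at hY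
    have ht : t = ⟨j, hjd⟩ := Fin.ext heq
    rw [ht]
    cases hc : F a ⟨j, hjd⟩ <;> cases hc' : F a' ⟨j, hjd⟩ <;>
      simp [hc, hc'] at hY ⊢
  · have := congrFun hmask t
    simpa [hgt] using this


lemma grp_eq (j : ℕ) (F : BStr d → BStr d) {a a' : BStr d}
    (hpre : ∀ t : Fin d, (t : ℕ) < j → F a t = F a' t) :
    grp d A j F a = grp d A j F a' := by
  unfold grp
  apply Finset.filter_congr
  intro b _
  constructor <;> intro hb t ht
  · rw [hb t ht, hpre t ht]
  · rw [hb t ht, hpre t ht]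

lemma mem_grp_self (j : ℕ) (F : BStr d → BStr d) {a : BStr d} (ha : a ∈ A) :
    a ∈ grp d A j F a := by
  simp [grp, ha]

lemma key_injOn (j : ℕ) (F : BStr d → BStr d) (hinj : Set.InjOn F ↑A) (a : BStr d) :
    ∀ b ∈ grp d A j F a, ∀ b' ∈ grp d A j F a,
      keyv d j F b = keyv d j F b' → b = b' := by
  intro b hb b' hb' hk
  rw [grp, Finset.mem_filter] at hb hb'
  have hpre : ∀ t : Fin d, (t : ℕ) < j → F b t = F b' t := by
    intro t ht; rw [hb.2 t ht, hb'.2 t ht]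
  exact hinj hb.1 hb'.1 (keyv_eq_of d j F hpre hk)

lemma rnk_lt (G : Finset (BStr d)) (j : ℕ) (F : BStr d → BStr d) {a : BStr d}
    (ha : a ∈ G) : rnk d G j F a < G.card := by
  apply Finset.card_lt_card
  constructor
  · exact Finset.filter_subset _ _
  · intro hsub
    have := Finset.mem_filter.1 (hsub ha)
    omega

lemma rnk_succ (G : Finset (BStr d)) (j : ℕ) (F : BStr d → BStr d)
    (hkinj : ∀ b ∈ G, ∀ b' ∈ G, keyv d j F b = keyv d j F b' → b = b')
    {a a' : BStr d} (ha : a ∈ G) (hk : keyv d j F a' = keyv d j F a + 1) :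
    rnk d G j F a' = rnk d G j F a + 1 := by
  unfold rnk
  rw [hk]
  have hins : (G.filter fun b => keyv d j F b < keyv d j F a + 1)
      = insert a (G.filter fun b => keyv d j F b < keyv d j F a) := by
    ext b
    simp only [Finset.mem_filter, Finset.mem_insert]
    constructor
    · rintro ⟨hbG, hblt⟩
      rcases Nat.lt_succ_iff_lt_or_eq.1 hblt with h | h
      · exact Or.inr ⟨hbG, h⟩
      · exact Or.inl (hkinj b hbG a ha h)
    · rintro (rfl | ⟨hbG, hblt⟩)
      · exact ⟨ha, by omega⟩
      · exact ⟨hbG, by omega⟩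
  rw [hins, Finset.card_insert_of_notMem]
  intro hmem
  have := Finset.mem_filter.1 hmem
  omega

lemma rnk_injOn (G : Finset (BStr d)) (j : ℕ) (F : BStr d → BStr d)
    (hkinj : ∀ b ∈ G, ∀ b' ∈ G, keyv d j F b = keyv d j F b' → b = b') :
    ∀ b ∈ G, ∀ b' ∈ G, rnk d G j F b = rnk d G j F b' → b = b' := by
  have hmono : ∀ b ∈ G, ∀ b' ∈ G, keyv d j F b < keyv d j F b' →
      rnk d G j F b < rnk d G j F b' := by
    intro b hb b' hb' hlt
    apply Finset.card_lt_card
    constructor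
    · intro c hc
      have := Finset.mem_filter.1 hc
      exact Finset.mem_filter.2 ⟨this.1, by omega⟩
    · intro hsub
      have hbmem : b ∈ G.filter fun c => keyv d j F c < keyv d j F b' :=
        Finset.mem_filter.2 ⟨hb, hlt⟩
      have := Finset.mem_filter.1 (hsub hbmem)
      omega
  intro b hb b' hb' hr
  rcases lt_trichotomy (keyv d j F b) (keyv d j F b') with h | h | h
  · exact absurd hr (by have := hmono b hb b' hb' h; omega)
  · exact hkinj b hb b' hb' h
  · exact absurd hr (by have := hmono b' hb' b hb h; omega)

lemma Pf_succ {j : ℕ} (h : j < d) (a : BStr d) :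
    Pf d A (j+1) a = Function.update (Pf d A j a) ⟨j, h⟩ (nb d A j (Pf d A j) a) := by
  simp [Pf, h]

lemma Pf_injOn : ∀ i : ℕ, Set.InjOn (Pf d A i) ↑A := by
  intro i
  induction i with
  | zero => intro a _ a' _ h; exact h
  | succ j ih =>
    intro a ha a' ha' h
    by_cases hd : j < d
    · rw [Pf_succ d A hd, Pf_succ d A hd] at h
      set F := Pf d A j with hF
      have hoth : ∀ t : Fin d, t ≠ ⟨j, hd⟩ → F a t = F a' t := by
        intro t ht
        have := congrFun h t
        rwa [Function.update_of_ne ht, Function.update_of_ne ht] at this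
      have hpre : ∀ t : Fin d, (t : ℕ) < j → F a t = F a' t := by
        intro t ht
        exact hoth t (by simp [Fin.ext_iff]; omega)
      by_cases hbit : F a ⟨j, hd⟩ = F a' ⟨j, hd⟩
      · refine ih ha ha' (funext fun t => ?_)
        by_cases ht : t = ⟨j, hd⟩
        · rw [ht]; exact hbit
        · exact hoth t ht
      · exfalso
        have hmask : (fun t : Fin d => decide (j < (t : ℕ)) && F a t)
            = (fun t : Fin d => decide (j < (t : ℕ)) && F a' t) := by
          funext t
          by_cases hgt : j < (t : ℕ)
          · have ht : t ≠ ⟨j, hd⟩ := by simp [Fin.ext_iff]; omega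
            simp [hgt, hoth t ht]
          · simp [hgt]
        have hGeq : grp d A j F a' = grp d A j F a :=
          grp_eq d A j F (fun t ht => (hpre t ht).symm)
        have hkinj := key_injOn d A j F ih a
        have haG : a ∈ grp d A j F a := mem_grp_self d A j F ha
        have ha'G : a' ∈ grp d A j F a := by
          rw [← hGeq]; exact mem_grp_self d A j F ha'
        have hnb : nb d A j F a = nb d A j F a' := by
          have := congrFun h ⟨j, hd⟩
          rwa [Function.update_self, Function.update_self] at this
        have hiff : (rnk d (grp d A j F a) j F a) % 2 = 1 ↔
            (rnk d (grp d A j F a) j F a') % 2 = 1 := by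
          have h2 : nb d A j F a' = decide ((rnk d (grp d A j F a) j F a') % 2 = 1) := by
            rw [nb, hGeq]
          rw [nb, h2] at hnb
          exact decide_eq_decide.1 hnb
        have hkd : keyv d j F a' = keyv d j F a + 1 ∨
            keyv d j F a = keyv d j F a' + 1 := by
          unfold keyv
          rw [hmask, dif_pos hd, dif_pos hd]
          cases hca : F a ⟨j, hd⟩ <;> cases hca' : F a' ⟨j, hd⟩ <;>
            simp_all <;> omega
        rcases hkd with hk1 | hk1
        · have := rnk_succ d (grp d A j F a) j F hkinj haG hk1
          omega
        · have := rnk_succ d (grp d A j F a) j F hkinj ha'G hk1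
          omega
    · have hPf : ∀ b, Pf d A (j+1) b = Pf d A j b := by
        intro b; simp [Pf, hd]
      rw [hPf, hPf] at h
      exact ih ha ha' h


lemma count_parity (p : ℕ) :
    ((Finset.range p).filter (fun i => i % 2 = 0)).card = (p+1)/2 ∧
    ((Finset.range p).filter (fun i => i % 2 = 1)).card = p/2 := by
  induction p with
  | zero => simp
  | succ p ih =>
    rw [Finset.range_add_one, Finset.filter_insert, Finset.filter_insert]
    by_cases hp : p % 2 = 0
    · rw [if_pos hp, if_neg (by omega), Finset.card_insert_of_notMem (by simp)]
      omega
    · rw [if_neg hp, if_pos (by omega), Finset.card_insert_of_notMem (by simp)]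
      omega

end BF

/-- in a `d`-dimensional standard butterfly, for any set `A` of
input nodes and any `k ≤ d`, there are `|A|` node-disjoint directed paths, one
starting at each node of `A` and ending on layer `k` (recorded by the string
`P a i` visited on each layer `i ≤ k`), splitting as evenly as possible at
every sub-butterfly: for every `j < k` and every binary string `x` of length
`j`, if `S` is the set of paths passing through a layer-`j` node whose first
`j` bits equal `x` (say `p = |S|` of them), then `⌈p/2⌉` of them continue to a
layer-`(j+1)` node whose `(j+1)`-st bit is one of the two values and `⌊p/2⌋`
to the other. -/
theorem butterfly_balanced_splitting
    (d k : ℕ) (hk : k ≤ d) (A : Finset (BStr d)) :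
    ∃ P : BStr d → ℕ → BStr d,
      (∀ a ∈ A, P a 0 = a) ∧
      (∀ a ∈ A, ∀ i < k, ∀ j : Fin d, (j : ℕ) ≠ i → P a i j = P a (i + 1) j) ∧
      (∀ a ∈ A, ∀ a' ∈ A, a ≠ a' → ∀ i ≤ k, P a i ≠ P a' i) ∧
      (∀ j : ℕ, ∀ hj : j < k, ∀ x : Fin j → Bool, ∀ S : Set (BStr d),
        S = {a | a ∈ A ∧
              ∀ t : Fin j, P a j (Fin.castLE (by omega) t) = x t} →
        (({a ∈ S | P a (j + 1) ⟨j, by omega⟩ = false}.ncard = (S.ncard + 1) / 2 ∧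
          {a ∈ S | P a (j + 1) ⟨j, by omega⟩ = true}.ncard = S.ncard / 2) ∨
         ({a ∈ S | P a (j + 1) ⟨j, by omega⟩ = true}.ncard = (S.ncard + 1) / 2 ∧
          {a ∈ S | P a (j + 1) ⟨j, by omega⟩ = false}.ncard = S.ncard / 2))) := by
  classical
  refine ⟨fun a i => BF.Pf d A i a, fun a _ => rfl, ?_, ?_, ?_⟩
  · intro a _ i hik jf hne
    beta_reduce
    rw [BF.Pf_succ d A (lt_of_lt_of_le hik hk), Function.update_of_ne]
    exact fun he => hne (by rw [he])
  · intro a _ a' ha' hne i _ h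
    exact hne (BF.Pf_injOn d A i (by assumption) ha' h)
  · intro j hj x S hS
    beta_reduce at hS ⊢
    have hjd : j < d := lt_of_lt_of_le hj hk
    set F := BF.Pf d A j with hF
    set G : Finset (BStr d) :=
      A.filter (fun a => ∀ t : Fin j, F a (Fin.castLE hjd.le t) = x t) with hG
    have hSG : S = (G : Set (BStr d)) := by
      ext a
      simp only [hS, Set.mem_setOf_eq, hG, Finset.coe_filter, Finset.mem_coe,
        Finset.mem_filter]
    have hgrpG : ∀ a ∈ G, BF.grp d A j F a = G := by
      intro a haG
      obtain ⟨haA, hax⟩ := Finset.mem_filter.1 haG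
      ext b
      simp only [BF.grp, hG, Finset.mem_filter]
      constructor
      · rintro ⟨hbA, hb⟩
        refine ⟨hbA, fun t => ?_⟩
        rw [hb (Fin.castLE hjd.le t) t.2]
        exact hax t
      · rintro ⟨hbA, hb⟩
        refine ⟨hbA, fun t ht => ?_⟩
        have h1 := hb ⟨(t : ℕ), ht⟩
        have h2 := hax ⟨(t : ℕ), ht⟩
        have hc : Fin.castLE hjd.le (⟨(t : ℕ), ht⟩ : Fin j) = t := rfl
        rw [hc] at h1 h2
        rw [h1, h2]
    have hinjF : Set.InjOn F ↑A := BF.Pf_injOn d A j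
    have hGsubA : G ⊆ A := Finset.filter_subset _ _
    have hkinjG : ∀ b ∈ G, ∀ b' ∈ G, BF.keyv d j F b = BF.keyv d j F b' → b = b' := by
      intro b hb b' hb' hkey
      obtain ⟨hbA, hbx⟩ := Finset.mem_filter.1 hb
      obtain ⟨hb'A, hb'x⟩ := Finset.mem_filter.1 hb'
      have hpre : ∀ t : Fin d, (t : ℕ) < j → F b t = F b' t := by
        intro t ht
        have h1 := hbx ⟨(t : ℕ), ht⟩
        have h2 := hb'x ⟨(t : ℕ), ht⟩
        have hc : Fin.castLE hjd.le (⟨(t : ℕ), ht⟩ : Fin j) = t := rfl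
        rw [hc] at h1 h2
        rw [h1, h2]
      exact hinjF hbA hb'A (BF.keyv_eq_of d j F hpre hkey)
    have hrinj : ∀ b ∈ G, ∀ b' ∈ G,
        BF.rnk d G j F b = BF.rnk d G j F b' → b = b' :=
      BF.rnk_injOn d G j F hkinjG
    have himg : G.image (fun a => BF.rnk d G j F a) = Finset.range G.card := by
      apply Finset.eq_of_subset_of_card_le
      · intro m hm
        obtain ⟨a, haG, rfl⟩ := Finset.mem_image.1 hm
        exact Finset.mem_range.2 (BF.rnk_lt d G j F haG)
      · rw [Finset.card_range,
          Finset.card_image_of_injOn (fun b hb b' hb' => hrinj b hb b' hb')]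
    have hval : ∀ a ∈ G, BF.Pf d A (j+1) a ⟨j, hjd⟩
        = decide ((BF.rnk d G j F a) % 2 = 1) := by
      intro a haG
      rw [BF.Pf_succ d A hjd, Function.update_self, BF.nb, hgrpG a haG, hF]
    have hcard : ∀ b : Bool,
        {a ∈ S | BF.Pf d A (j+1) a ⟨j, hjd⟩ = b}.ncard
          = ((Finset.range G.card).filter
              (fun m => m % 2 = cond b 1 0)).card := by
      intro b
      have e0 : {a ∈ S | BF.Pf d A (j+1) a ⟨j, hjd⟩ = b}
          = ((G.filter fun a => BF.rnk d G j F a % 2 = cond b 1 0) :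
              Set (BStr d)) := by
        ext c
        simp only [Set.mem_setOf_eq, hSG, Finset.mem_coe, Finset.coe_filter,
          Finset.mem_filter]
        constructor
        · rintro ⟨hcG, hc⟩
          refine ⟨hcG, ?_⟩
          rw [hval c hcG] at hc
          cases b
          · simp only [decide_eq_false_iff_not] at hc
            simpa using (by omega : BF.rnk d G j F c % 2 = 0)
          · simpa using of_decide_eq_true hc
        · rintro ⟨hcG, hc⟩
          refine ⟨hcG, ?_⟩
          rw [hval c hcG]
          cases b
          · simp only [Bool.cond_false] at hc
            simp [hc]
          · simp only [Bool.cond_true] at hc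
            simp [hc]
      rw [e0, Set.ncard_coe_finset]
      have h1 : ((G.image (fun a => BF.rnk d G j F a)).filter
            (fun m => m % 2 = cond b 1 0))
          = (G.filter fun a => BF.rnk d G j F a % 2 = cond b 1 0).image
              (fun a => BF.rnk d G j F a) := Finset.filter_image
      rw [← himg, h1, Finset.card_image_of_injOn]
      intro c hc c' hc' hcc
      have hcG := Finset.filter_subset _ _ hc
      have hc'G := Finset.filter_subset _ _ hc'
      exact hrinj c hcG c' hc'G hcc
    have hS2 : S.ncard = G.card := by rw [hSG, Set.ncard_coe_finset]
    left
    constructor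
    · show {a ∈ S | BF.Pf d A (j+1) a ⟨j, hjd⟩ = false}.ncard = (S.ncard + 1) / 2
      rw [hcard false, hS2]
      simpa using (BF.count_parity G.card).1
    · show {a ∈ S | BF.Pf d A (j+1) a ⟨j, hjd⟩ = true}.ncard = S.ncard / 2
      rw [hcard true, hS2]
      simpa using (BF.count_parity G.card).2
end

section
/- Let G be a pair of d-dimensional layer-permuted butterflies with left layer permutation π and right layer permutation σ, and fix q ≤ d, m = d − q. Then every connected component of the q-dimensional sub-butterfly connectivity graph of G is a complete bipartite graph with the same number of vertices on each side. -/
/-- The string `b` lies in the left sub-butterfly `x*` of a pair of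
`d`-dimensional layer-permuted butterflies with left layer permutation `π`
(written `0`-based): bit `π i` of `b` equals `x i` for all `i < m = d - q`. -/
def leftSubMem (d q : ℕ) (π : Equiv.Perm (Fin d))
    (x : Fin (d - q) → Bool) (b : BStr d) : Prop :=
  ∀ i : Fin (d - q), b (π (Fin.castLE (Nat.sub_le d q) i)) = x i

/-- The string `b` lies in the right sub-butterfly `*y` of a pair of
`d`-dimensional layer-permuted butterflies with right layer permutation `σ`
(written `0`-based): bit `σ (q + j)` of `b` equals `y j` for all
`j < m = d - q`. -/
def rightSubMem (d q : ℕ) (hq : q ≤ d) (σ : Equiv.Perm (Fin d))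
    (y : Fin (d - q) → Bool) (b : BStr d) : Prop :=
  ∀ j : Fin (d - q), b (σ (Fin.castLE (by omega) (Fin.natAdd q j))) = y j

/-- The left sub-butterfly `x*` and the right sub-butterfly `*y` share at least
one node on layer `d`. -/
def connRel (d q : ℕ) (hq : q ≤ d) (π σ : Equiv.Perm (Fin d))
    (x y : Fin (d - q) → Bool) : Prop :=
  ∃ b : BStr d, leftSubMem d q π x b ∧ rightSubMem d q hq σ y b

/-- The `q`-dimensional sub-butterfly connectivity graph of a pair of
`d`-dimensional layer-permuted butterflies: a bipartite graph whose left
vertices (`Sum.inl`) are the `2^m` left sub-butterflies `x*` and whose right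
vertices (`Sum.inr`) are the `2^m` right sub-butterflies `*y`, adjacent iff
the two sub-butterflies share a node on layer `d`. -/
def connGraph (d q : ℕ) (hq : q ≤ d) (π σ : Equiv.Perm (Fin d)) :
    SimpleGraph ((Fin (d - q) → Bool) ⊕ (Fin (d - q) → Bool)) where
  Adj u v :=
    (∃ x y, u = Sum.inl x ∧ v = Sum.inr y ∧ connRel d q hq π σ x y) ∨
    (∃ x y, u = Sum.inr y ∧ v = Sum.inl x ∧ connRel d q hq π σ x y)
  symm := by
    constructor
    rintro u v (⟨x, y, rfl, rfl, h⟩ | ⟨x, y, rfl, rfl, h⟩)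
    · exact Or.inr ⟨x, y, rfl, rfl, h⟩
    · exact Or.inl ⟨x, y, rfl, rfl, h⟩
  loopless := by
    constructor
    rintro u (⟨x, y, h1, h2, -⟩ | ⟨x, y, h1, h2, -⟩) <;> subst h1 <;> simp at h2

/-!
Left sub-butterflies fix the bits at the positions `A = π {1, …, m}`, right ones the bits at
`B = σ {q + 1, …, d}`; so `x*` and `*y` meet on layer `d` iff `x` and `y` prescribe the same
bits on `A ∩ B`. This agreement relation has the rectangle property (`x ~ y`, `x' ~ y`,
`x' ~ y'` imply `x ~ y'`), which forces every component of its bipartite graph to be complete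
bipartite. The component through an edge `x₀ ~ y₀` consists of all `x` agreeing with `x₀` on
`A ∩ B` and all `y` agreeing with `y₀` there: `2 ^ (m - |A ∩ B|)` strings on either side.
-/

open Function Set SimpleGraph

section Difunctional

variable {α β : Type*}

/-- Riguet's difunctional relations. -/
def Difunctional (R : α → β → Prop) : Prop :=
  ∀ ⦃x x' y y'⦄, R x y → R x' y → R x' y' → R x y'

def relGraph (R : α → β → Prop) : SimpleGraph (α ⊕ β) where
  Adj
    | .inl x, .inr y => R x y
    | .inr y, .inl x => R x y
    | _, _ => False
  symm := ⟨by rintro (x | y) (x' | y') h <;> exact h⟩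
  loopless := ⟨by rintro (x | y) h <;> exact h⟩

variable {R : α → β → Prop} {x x₀ : α} {y y₀ : β}

theorem Difunctional.rel_of_reachable (hR : Difunctional R)
    (h : (relGraph R).Reachable (.inl x) (.inr y)) : R x y := by
  -- invariant of walks from `inl x`: `x` is related to the end if it is in `β`, and to all
  -- neighbours of the end if it is in `α`
  let P : α ⊕ β → Prop
    | .inl x' => ∀ y', R x' y' → R x y'
    | .inr y' => R x y'
  suffices ∀ v, Relation.ReflTransGen (relGraph R).Adj (.inl x) v → P v from
    this _ ((reachable_iff_reflTransGen _ _).mp h)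
  intro v hv
  induction hv with
  | refl => exact fun _ => id
  | @tail u w _ hadj ih =>
    rcases u with _ | _ <;> rcases w with _ | _
    · exact hadj.elim
    · exact ih _ hadj
    · exact fun _ h => hR ih hadj h
    · exact hadj.elim

theorem Difunctional.reachable_inl_inr_iff (hR : Difunctional R) :
    (relGraph R).Reachable (.inl x) (.inr y) ↔ R x y :=
  ⟨hR.rel_of_reachable, fun h => Adj.reachable h⟩

theorem Difunctional.reachable_inl_inl_iff (hR : Difunctional R) (h₀ : R x₀ y₀) :
    (relGraph R).Reachable (.inl x) (.inl x₀) ↔ R x y₀ := by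
  have hx₀ : (relGraph R).Reachable (.inl x₀) (.inr y₀) := Adj.reachable h₀
  rw [← hR.reachable_inl_inr_iff]
  exact ⟨fun h => h.trans hx₀, fun h => h.trans hx₀.symm⟩

theorem Difunctional.reachable_inr_inl_iff (hR : Difunctional R) :
    (relGraph R).Reachable (.inr y) (.inl x) ↔ R x y :=
  reachable_comm.trans hR.reachable_inl_inr_iff

theorem Difunctional.setOf_inl_mem_supp (hR : Difunctional R) (h₀ : R x₀ y₀) :
    {x | .inl x ∈ ((relGraph R).connectedComponentMk (.inl x₀)).supp} = {x | R x y₀} := by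
  ext x
  simp only [mem_ofPred_eq, ConnectedComponent.mem_supp_iff, ConnectedComponent.eq]
  exact hR.reachable_inl_inl_iff h₀

theorem Difunctional.setOf_inr_mem_supp (hR : Difunctional R) :
    {y | .inr y ∈ ((relGraph R).connectedComponentMk (.inl x₀)).supp} = {y | R x₀ y} := by
  ext y
  simp only [mem_ofPred_eq, ConnectedComponent.mem_supp_iff, ConnectedComponent.eq]
  exact hR.reachable_inr_inl_iff

theorem exists_rel_connectedComponentMk_eq (hl : ∀ x, ∃ y, R x y) (hr : ∀ y, ∃ x, R x y)
    (C : (relGraph R).ConnectedComponent) :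
    ∃ x₀ y₀, R x₀ y₀ ∧ (relGraph R).connectedComponentMk (.inl x₀) = C := by
  induction C using ConnectedComponent.ind with
  | h v =>
    rcases v with x₀ | y₀
    · obtain ⟨y₀, h₀⟩ := hl x₀
      exact ⟨x₀, y₀, h₀, rfl⟩
    · obtain ⟨x₀, h₀⟩ := hr y₀
      exact ⟨x₀, y₀, h₀, ConnectedComponent.eq.mpr (Adj.reachable h₀)⟩

end Difunctional

section AgreeOnOverlap

variable {α β γ M : Type*} {f : α → γ} {g : β → γ}

def AgreeOnOverlap (f : α → γ) (g : β → γ) (x : α → M) (y : β → M) : Prop :=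
  ∀ a b, f a = g b → x a = y b

theorem agreeOnOverlap_comm {x : α → M} {y : β → M} :
    AgreeOnOverlap f g x y ↔ AgreeOnOverlap g f y x :=
  ⟨fun h b a hab => (h a b hab.symm).symm, fun h a b hab => (h b a hab.symm).symm⟩

theorem agreeOnOverlap_difunctional :
    Difunctional (AgreeOnOverlap f g : (α → M) → (β → M) → Prop) :=
  fun _ _ _ _ hxy hx'y hx'y' a b hab => (hxy a b hab).trans <|
    (hx'y a b hab).symm.trans (hx'y' a b hab)

theorem agreeOnOverlap_comp (c : γ → M) : AgreeOnOverlap f g (c ∘ f) (c ∘ g) :=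
  fun _ _ hab => congrArg c hab

theorem exists_extension_iff_agreeOnOverlap [Inhabited M] (hf : Injective f) (hg : Injective g)
    {x : α → M} {y : β → M} :
    (∃ c : γ → M, (∀ a, c (f a) = x a) ∧ ∀ b, c (g b) = y b) ↔ AgreeOnOverlap f g x y := by
  constructor
  · rintro ⟨c, hcx, hcy⟩
    rw [← funext hcx, ← funext hcy]
    exact agreeOnOverlap_comp c
  · intro h
    refine ⟨extend f x (extend g y default), fun a => hf.extend_apply _ _ _, fun b => ?_⟩
    by_cases hb : ∃ a, f a = g b
    · obtain ⟨a, hab⟩ := hb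
      rw [← hab, hf.extend_apply]
      exact h a b hab
    · rw [extend_apply' _ _ _ hb, hg.extend_apply]

theorem exists_agreeOnOverlap_right [Inhabited M] (hf : Injective f) (x : α → M) :
    ∃ y : β → M, AgreeOnOverlap f g x y := by
  refine ⟨extend f x default ∘ g, ?_⟩
  conv_lhs => rw [← extend_comp hf x default]
  exact agreeOnOverlap_comp _

theorem exists_agreeOnOverlap_left [Inhabited M] (hg : Injective g) (y : β → M) :
    ∃ x : α → M, AgreeOnOverlap f g x y :=
  (exists_agreeOnOverlap_right hg y).imp fun _ => agreeOnOverlap_comm.mpr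

theorem ncard_eqOn_eq_pow [Finite α] [Finite M] (s : Set α) (x₀ : α → M) :
    {x : α → M | ∀ a ∈ s, x a = x₀ a}.ncard = Nat.card M ^ sᶜ.ncard := by
  classical
  let e : {x : α → M // ∀ a ∈ s, x a = x₀ a} ≃ (↥sᶜ → M) :=
    { toFun x a := x.1 a
      invFun z := ⟨fun a => if h : a ∈ s then x₀ a else z ⟨a, h⟩, fun a ha => dif_pos ha⟩
      left_inv x := Subtype.ext <| funext fun a => by
        by_cases h : a ∈ s
        · exact (dif_pos h).trans (x.2 a h).symm
        · exact dif_neg h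
      right_inv z := funext fun a => dif_neg a.2 }
  rw [← Nat.card_coe_set_eq, ← Nat.card_coe_set_eq, ← Nat.card_fun]
  exact Nat.card_congr e

theorem ncard_agreeOnOverlap_left [Finite α] [Finite M] {x₀ : α → M} {y₀ : β → M}
    (h₀ : AgreeOnOverlap f g x₀ y₀) :
    {x | AgreeOnOverlap f g x y₀}.ncard = Nat.card M ^ (f ⁻¹' range g)ᶜ.ncard := by
  rw [← ncard_eqOn_eq_pow _ x₀]
  congr 1
  ext x
  refine ⟨fun h a ⟨b, hba⟩ => (h a b hba.symm).trans (h₀ a b hba.symm).symm,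
    fun h a b hab => (h a ⟨b, hab.symm⟩).trans (h₀ a b hab)⟩

theorem ncard_compl_preimage_range [Finite α] (hf : Injective f) :
    (f ⁻¹' range g)ᶜ.ncard = Nat.card α - (range f ∩ range g).ncard := by
  have hpre : (f ⁻¹' range g).ncard = (range f ∩ range g).ncard := by
    rw [← preimage_inter_range, inter_comm]
    exact ncard_preimage_of_injective_subset_range hf inter_subset_left
  rw [← hpre, ← ncard_add_ncard_compl (f ⁻¹' range g)]
  omega

theorem AgreeOnOverlap.ncard_left_eq_ncard_right [Finite α] [Finite β] [Finite M]
    (hf : Injective f) (hg : Injective g) (hcard : Nat.card α = Nat.card β)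
    {x₀ : α → M} {y₀ : β → M} (h₀ : AgreeOnOverlap f g x₀ y₀) :
    {x | AgreeOnOverlap f g x y₀}.ncard = {y | AgreeOnOverlap f g x₀ y}.ncard := by
  simp_rw [agreeOnOverlap_comm (f := f) (x := x₀)]
  rw [ncard_agreeOnOverlap_left h₀, ncard_agreeOnOverlap_left (agreeOnOverlap_comm.mp h₀),
    ncard_compl_preimage_range hf, ncard_compl_preimage_range hg, inter_comm, hcard]

end AgreeOnOverlap

section Butterfly

variable (d q : ℕ) (hq : q ≤ d) (π σ : Equiv.Perm (Fin d))

def leftBitPos (i : Fin (d - q)) : Fin d := π (Fin.castLE (Nat.sub_le d q) i)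

def rightBitPos (j : Fin (d - q)) : Fin d := σ (Fin.castLE (by omega) (Fin.natAdd q j))

theorem leftBitPos_injective : Injective (leftBitPos d q π) :=
  π.injective.comp (Fin.castLE_injective _)

theorem rightBitPos_injective : Injective (rightBitPos d q hq σ) :=
  σ.injective.comp ((Fin.castLE_injective _).comp (Fin.natAdd_injective _ _))

theorem connRel_iff_agreeOnOverlap {x y : Fin (d - q) → Bool} :
    connRel d q hq π σ x y ↔ AgreeOnOverlap (leftBitPos d q π) (rightBitPos d q hq σ) x y :=
  exists_extension_iff_agreeOnOverlap (leftBitPos_injective d q π)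
    (rightBitPos_injective d q hq σ)

theorem connGraph_eq_relGraph :
    connGraph d q hq π σ =
      relGraph (AgreeOnOverlap (leftBitPos d q π) (rightBitPos d q hq σ)) := by
  ext (x | y) (x' | y') <;> simp [connGraph, relGraph, connRel_iff_agreeOnOverlap]

end Butterfly

/-- every connected component of the `q`-dimensional
sub-butterfly connectivity graph of a pair of `d`-dimensional layer-permuted
butterflies is a complete bipartite graph with the same number of vertices on
each side. -/
theorem connectivity_graph_components_complete_bipartite
    (d q : ℕ) (hq : q ≤ d) (π σ : Equiv.Perm (Fin d)) :
    (∀ x y : Fin (d - q) → Bool,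
      (connGraph d q hq π σ).connectedComponentMk (Sum.inl x) =
        (connGraph d q hq π σ).connectedComponentMk (Sum.inr y) →
      (connGraph d q hq π σ).Adj (Sum.inl x) (Sum.inr y)) ∧
    (∀ C : (connGraph d q hq π σ).ConnectedComponent,
      {x : Fin (d - q) → Bool | Sum.inl x ∈ C.supp}.ncard =
        {y : Fin (d - q) → Bool | Sum.inr y ∈ C.supp}.ncard) := by
  have hf := leftBitPos_injective d q π
  have hg := rightBitPos_injective d q hq σ
  have hR := agreeOnOverlap_difunctional (f := leftBitPos d q π) (g := rightBitPos d q hq σ)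
    (M := Bool)
  rw [connGraph_eq_relGraph]
  refine ⟨fun x y h => hR.rel_of_reachable (ConnectedComponent.eq.mp h), fun C => ?_⟩
  obtain ⟨x₀, y₀, h₀, rfl⟩ := exists_rel_connectedComponentMk_eq
    (exists_agreeOnOverlap_right hf) (exists_agreeOnOverlap_left hg) C
  rw [hR.setOf_inl_mem_supp h₀, hR.setOf_inr_mem_supp]
  exact h₀.ncard_left_eq_ncard_right hf hg rfl
end

section
/- Let G be a pair of d-dimensional layer-permuted butterflies with left layer permutation π and right layer permutation σ, and fix q ≤ d, m = d − q. For binary strings x and y of length m, the left sub-butterfly x* and the right sub-butterfly *y share at least one node on layer d if and only if for all i ∈ {1,…,m} and j ∈ {1,…,m} with π(i) = σ(q + j), one has x_i = y_j. -/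
theorem Function.exists_comp_eq_and_comp_eq_iff {ι κ α β : Type*} [Nonempty β]
    {f : ι → α} {g : κ → α} (hf : f.Injective) (hg : g.Injective) (x : ι → β) (y : κ → β) :
    (∃ b : α → β, (∀ i, b (f i) = x i) ∧ ∀ j, b (g j) = y j) ↔
      ∀ i j, f i = g j → x i = y j := by
  constructor
  · rintro ⟨b, hbx, hby⟩ i j hij
    rw [← hbx i, hij, hby j]
  · intro hxy
    refine ⟨extend f x (extend g y fun _ => Classical.arbitrary β), hf.extend_apply x _, ?_⟩
    intro j
    by_cases hj : ∃ i, f i = g j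
    · obtain ⟨i, hij⟩ := hj
      rw [← hij, hf.extend_apply, hxy i j hij]
    · rw [extend_apply' _ _ _ hj, hg.extend_apply]

/-- the left sub-butterfly `x*` and the right sub-butterfly `*y`
share a node on layer `d` iff for all `i, j < m = d - q` with
`π i = σ (q + j)` one has `x i = y j`. -/
theorem connRel_iff_agree_on_shared_bits
    (d q : ℕ) (hq : q ≤ d) (π σ : Equiv.Perm (Fin d))
    (x y : Fin (d - q) → Bool) :
    connRel d q hq π σ x y ↔
      ∀ (i j : Fin (d - q)),
        π (Fin.castLE (Nat.sub_le d q) i) =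
          σ (Fin.castLE (by omega) (Fin.natAdd q j)) →
        x i = y j :=
  Function.exists_comp_eq_and_comp_eq_iff
    (π.injective.comp (Fin.castLE_injective _))
    (σ.injective.comp ((Fin.castLE_injective _).comp (Fin.natAdd_injective _ q))) x y
end

section
/- Let G be a pair of d-dimensional layer-permuted butterflies with left layer permutation π and right layer permutation σ; fix q ≤ d and m = d − q, with q ≥ 1. Suppose (no reused dimensions) π(m+1) ∉ {σ(q), σ(q+1), …, σ(d)} and σ(q) ∉ {π(1), …, π(m+1)}. Then for every connected component C of the q-dimensional sub-butterfly connectivity graph, the set of children of the vertices of C (each left vertex x* has children x0* and x1*, fixing bit π(m+1); each right vertex *y has children *0y and *1y, fixing bit σ(q)) forms a single connected component of the (q−1)-dimensional sub-butterfly connectivity graph, and this component is a complete bipartite graph with twice as many vertices on each side as C. -/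
/-- The child `x0*` or `x1*` (according to `t`) of the left sub-butterfly `x*`:
the `(q-1)`-dimensional left sub-butterfly obtained by additionally fixing bit
`π (m+1)` (`0`-based: `π m`, `m = d - q`) to the value `t`. -/
def childL (d q : ℕ) (x : Fin (d - q) → Bool) (t : Bool) :
    Fin (d - (q - 1)) → Bool :=
  fun i => if h : (i : ℕ) < d - q then x ⟨i, h⟩ else t

/-- The child `*0y` or `*1y` (according to `t`) of the right sub-butterfly
`*y`: the `(q-1)`-dimensional right sub-butterfly obtained by additionally
fixing bit `σ q` (`0`-based: `σ (q-1)`) to the value `t`. -/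
def childR (d q : ℕ) (y : Fin (d - q) → Bool) (t : Bool) :
    Fin (d - (q - 1)) → Bool :=
  fun j => if h : 0 < (j : ℕ) then y ⟨(j : ℕ) - 1, by have := j.isLt; omega⟩ else t

/-- The child (according to `t`) of a vertex of the `q`-dimensional
sub-butterfly connectivity graph, as a vertex of the `(q-1)`-dimensional one. -/
def childV (d q : ℕ) :
    ((Fin (d - q) → Bool) ⊕ (Fin (d - q) → Bool)) → Bool →
      ((Fin (d - (q - 1)) → Bool) ⊕ (Fin (d - (q - 1)) → Bool))
  | Sum.inl x, t => Sum.inl (childL d q x t)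
  | Sum.inr y, t => Sum.inr (childR d q y t)

namespace Function

def Compatible {α β γ δ : Type*} (L : α → γ) (R : β → γ) (x : α → δ) (y : β → δ) : Prop :=
  ∀ i j, L i = R j → x i = y j

variable {α β γ δ : Type*} {L : α → γ} {R : β → γ} {x : α → δ} {y : β → δ}

theorem exists_comp_eq_and_comp_eq_iff_s13 [Nonempty δ] (hL : Injective L) (hR : Injective R) :
    (∃ b : γ → δ, b ∘ L = x ∧ b ∘ R = y) ↔ Compatible L R x y := by
  constructor
  · rintro ⟨b, rfl, rfl⟩ i j hij
    simp [hij]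
  · intro h
    refine ⟨extend L x (extend R y fun _ => Classical.arbitrary δ), funext (hL.extend_apply _ _),
      funext fun j => ?_⟩
    by_cases hj : ∃ i, L i = R j
    · obtain ⟨i, hi⟩ := hj
      simp only [comp_apply, ← hi, hL.extend_apply, h i j hi]
    · simp only [comp_apply, extend_apply' _ _ _ hj, hR.extend_apply]

theorem compatible_comp_equiv_iff {α' β' : Type*} (e : α' ≃ α) (e' : β' ≃ β) :
    Compatible (L ∘ e) (R ∘ e') (x ∘ e) (y ∘ e') ↔ Compatible L R x y :=
  e.forall_congr fun _ => e'.forall_congr fun _ => Iff.rfl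

theorem compatible_snoc_cons_iff {a c : ℕ} {L : Fin a → γ} {R : Fin c → γ}
    {x : Fin a → δ} {y : Fin c → δ} {p r : γ} {t s : δ}
    (hp : p ∉ Set.range (Fin.cons r R : Fin (c + 1) → γ))
    (hr : r ∉ Set.range (Fin.snoc L p : Fin (a + 1) → γ)) :
    Compatible (Fin.snoc L p : Fin (a + 1) → γ) (Fin.cons r R : Fin (c + 1) → γ)
      (Fin.snoc x t : Fin (a + 1) → δ) (Fin.cons s y : Fin (c + 1) → δ) ↔
      Compatible L R x y := by
  constructor
  · intro h i j hij
    simpa using h i.castSucc j.succ (by simpa using hij)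
  · intro h i j hij
    induction i using Fin.lastCases with
    | last => exact absurd ⟨j, by simpa using hij.symm⟩ hp
    | cast i =>
      induction j using Fin.cases with
      | zero => exact absurd ⟨i.castSucc, hij⟩ hr
      | succ j => simpa using h i j (by simpa using hij)

end Function

open Function

section Positions

variable {d n : ℕ}

/-- The positions of the bits fixed by the left sub-butterflies `x*`. -/
def leftPos (d n : ℕ) (π : Equiv.Perm (Fin d)) : Fin (d - n) → Fin d :=
  fun i => π (Fin.castLE (Nat.sub_le d n) i)

/-- The positions of the bits fixed by the right sub-butterflies `*y`. -/
def rightPos (d n : ℕ) (hn : n ≤ d) (σ : Equiv.Perm (Fin d)) : Fin (d - n) → Fin d :=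
  fun j => σ (Fin.castLE (Nat.add_sub_of_le hn).le (Fin.natAdd n j))

theorem leftPos_injective (π : Equiv.Perm (Fin d)) : Injective (leftPos d n π) :=
  π.injective.comp (Fin.castLE_injective _)

theorem rightPos_injective (hn : n ≤ d) (σ : Equiv.Perm (Fin d)) :
    Injective (rightPos d n hn σ) :=
  σ.injective.comp ((Fin.castLE_injective _).comp (Fin.natAdd_injective _ _))

variable (hn : n ≤ d) (π σ : Equiv.Perm (Fin d))

theorem connRel_iff_compatible (x y : Fin (d - n) → Bool) :
    connRel d n hn π σ x y ↔ Compatible (leftPos d n π) (rightPos d n hn σ) x y := by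
  rw [← exists_comp_eq_and_comp_eq_iff_s13 (leftPos_injective π) (rightPos_injective hn σ)]
  simp only [connRel, leftSubMem, rightSubMem, funext_iff]
  rfl

theorem exists_connRel_right (x : Fin (d - n) → Bool) : ∃ y, connRel d n hn π σ x y := by
  obtain ⟨b, hb⟩ := (leftPos_injective (n := n) π).surjective_comp_right x
  exact ⟨b ∘ rightPos d n hn σ, b, fun i => congrFun hb i, fun _ => rfl⟩

theorem exists_connRel_left (y : Fin (d - n) → Bool) : ∃ x, connRel d n hn π σ x y := by
  obtain ⟨b, hb⟩ := (rightPos_injective hn σ).surjective_comp_right y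
  exact ⟨b ∘ leftPos d n π, b, fun _ => rfl, fun j => congrFun hb j⟩

theorem connRel_of_zigzag {x x' y y' : Fin (d - n) → Bool} (hxy : connRel d n hn π σ x y)
    (hx'y : connRel d n hn π σ x' y) (hx'y' : connRel d n hn π σ x' y') :
    connRel d n hn π σ x y' := by
  rw [connRel_iff_compatible] at *
  intro i j hij
  rw [hxy i j hij, ← hx'y i j hij, hx'y' i j hij]

@[simp]
theorem connGraph_adj_inl_inr (x y : Fin (d - n) → Bool) :
    (connGraph d n hn π σ).Adj (.inl x) (.inr y) ↔ connRel d n hn π σ x y := by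
  simp [connGraph]

@[simp]
theorem connGraph_adj_inr_inl (x y : Fin (d - n) → Bool) :
    (connGraph d n hn π σ).Adj (.inr y) (.inl x) ↔ connRel d n hn π σ x y := by
  simp [connGraph]

@[simp]
theorem connGraph_not_adj_inl_inl (x x' : Fin (d - n) → Bool) :
    ¬(connGraph d n hn π σ).Adj (.inl x) (.inl x') := by
  simp [connGraph]

@[simp]
theorem connGraph_not_adj_inr_inr (y y' : Fin (d - n) → Bool) :
    ¬(connGraph d n hn π σ).Adj (.inr y) (.inr y') := by
  simp [connGraph]

theorem connGraph_exists_adj (u : (Fin (d - n) → Bool) ⊕ (Fin (d - n) → Bool)) :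
    ∃ v, (connGraph d n hn π σ).Adj u v := by
  cases u with
  | inl x => obtain ⟨y, h⟩ := exists_connRel_right hn π σ x; exact ⟨.inr y, by simpa⟩
  | inr y => obtain ⟨x, h⟩ := exists_connRel_left hn π σ y; exact ⟨.inl x, by simpa⟩

theorem connRel_of_reachable {x y : Fin (d - n) → Bool}
    (h : (connGraph d n hn π σ).Reachable (.inl x) (.inr y)) : connRel d n hn π σ x y := by
  -- invariant along a walk from `x*`: right vertices are neighbours of `x*`, left vertices
  -- share a neighbour with it
  suffices ∀ v, Relation.ReflTransGen (connGraph d n hn π σ).Adj (.inl x) v →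
      Sum.elim (fun x' => ∃ y, connRel d n hn π σ x y ∧ connRel d n hn π σ x' y)
        (connRel d n hn π σ x) v from
    this _ ((SimpleGraph.reachable_iff_reflTransGen _ _).mp h)
  intro v hv
  induction hv with
  | refl => simpa using exists_connRel_right hn π σ x
  | tail _ hadj ih =>
    rcases hadj with ⟨x', y', rfl, rfl, h⟩ | ⟨x', y', rfl, rfl, h⟩
    · obtain ⟨y, hxy, hx'y⟩ := ih
      exact connRel_of_zigzag hn π σ hxy hx'y h
    · exact ⟨y', ih, h⟩

end Positions

section Children

variable {d q : ℕ} (hq1 : 1 ≤ q) (hqd : q ≤ d)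
include hq1 hqd

/-- In the `(q - 1)`-dimensional graph the left children append a bit and the right children
prepend one, so we index its strings by `Fin (d - q + 1)`. -/
def childIdx : Fin (d - q + 1) ≃ Fin (d - (q - 1)) := finCongr (by omega)

theorem childL_comp_childIdx (x : Fin (d - q) → Bool) (t : Bool) :
    childL d q x t ∘ childIdx hq1 hqd = Fin.snoc x t := by
  funext i
  induction i using Fin.lastCases <;> simp [childL, childIdx]

theorem childR_comp_childIdx (y : Fin (d - q) → Bool) (t : Bool) :
    childR d q y t ∘ childIdx hq1 hqd = Fin.cons t y := by
  funext j
  induction j using Fin.cases <;> simp [childR, childIdx]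

theorem leftPos_comp_childIdx (π : Equiv.Perm (Fin d)) :
    leftPos d (q - 1) π ∘ childIdx hq1 hqd =
      Fin.snoc (leftPos d q π) (π ⟨d - q, Nat.sub_lt_self hq1 hqd⟩) := by
  funext i
  induction i using Fin.lastCases <;> simp [leftPos, childIdx, Fin.ext_iff]

theorem rightPos_comp_childIdx (σ : Equiv.Perm (Fin d)) :
    rightPos d (q - 1) ((Nat.sub_le q 1).trans hqd) σ ∘ childIdx hq1 hqd =
      Fin.cons (σ ⟨q - 1, Nat.sub_one_lt_of_le hq1 hqd⟩) (rightPos d q hqd σ) := by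
  funext j
  induction j using Fin.cases with
  | zero => simp [rightPos, childIdx, Fin.ext_iff]
  | succ j => simp [rightPos, childIdx, Fin.ext_iff]; omega

theorem childL_injective2 : Injective2 (childL d q) := by
  intro x x' t t' h
  have h' := congrArg (· ∘ childIdx hq1 hqd) h
  simp only [childL_comp_childIdx] at h'
  exact Fin.snoc_injective2 h'

theorem childR_injective2 : Injective2 (childR d q) := by
  intro y y' t t' h
  have h' := congrArg (· ∘ childIdx hq1 hqd) h
  simp only [childR_comp_childIdx] at h'
  exact (Fin.cons_injective2 h').symm

theorem exists_childL_eq (x' : Fin (d - (q - 1)) → Bool) : ∃ x t, childL d q x t = x' := by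
  refine ⟨Fin.init (x' ∘ childIdx hq1 hqd), x' (childIdx hq1 hqd (Fin.last _)),
    (childIdx hq1 hqd).surjective.injective_comp_right ?_⟩
  simp only [childL_comp_childIdx]
  exact Fin.snoc_init_self (x' ∘ childIdx hq1 hqd)

theorem exists_childR_eq (y' : Fin (d - (q - 1)) → Bool) : ∃ y t, childR d q y t = y' := by
  refine ⟨Fin.tail (y' ∘ childIdx hq1 hqd), y' (childIdx hq1 hqd 0),
    (childIdx hq1 hqd).surjective.injective_comp_right ?_⟩
  simp only [childR_comp_childIdx]
  exact Fin.cons_self_tail (y' ∘ childIdx hq1 hqd)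

theorem childV_injective2 : Injective2 (childV d q) := by
  intro u v t s h
  cases u <;> cases v <;> simp only [childV, reduceCtorEq, Sum.inl.injEq, Sum.inr.injEq] at h ⊢
  · exact childL_injective2 hq1 hqd h
  · exact childR_injective2 hq1 hqd h

theorem exists_childV_eq (w : (Fin (d - (q - 1)) → Bool) ⊕ (Fin (d - (q - 1)) → Bool)) :
    ∃ u t, childV d q u t = w := by
  cases w with
  | inl x' => obtain ⟨x, t, rfl⟩ := exists_childL_eq hq1 hqd x'; exact ⟨.inl x, t, rfl⟩
  | inr y' => obtain ⟨y, t, rfl⟩ := exists_childR_eq hq1 hqd y'; exact ⟨.inr y, t, rfl⟩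

variable (π σ : Equiv.Perm (Fin d))
  (hπ : ∀ k : Fin d, q - 1 ≤ (k : ℕ) → σ k ≠ π ⟨d - q, Nat.sub_lt_self hq1 hqd⟩)
  (hσ : ∀ k : Fin d, (k : ℕ) ≤ d - q → π k ≠ σ ⟨q - 1, Nat.sub_one_lt_of_le hq1 hqd⟩)
include hπ hσ

theorem connRel_childL_childR_iff (x y : Fin (d - q) → Bool) (t s : Bool) :
    connRel d (q - 1) ((Nat.sub_le q 1).trans hqd) π σ (childL d q x t) (childR d q y s) ↔
      connRel d q hqd π σ x y := by
  rw [connRel_iff_compatible, connRel_iff_compatible,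
    ← compatible_comp_equiv_iff (childIdx hq1 hqd) (childIdx hq1 hqd), leftPos_comp_childIdx,
    rightPos_comp_childIdx, childL_comp_childIdx, childR_comp_childIdx]
  refine compatible_snoc_cons_iff ?_ ?_
  · rintro ⟨j, hj⟩
    rw [← rightPos_comp_childIdx hq1 hqd] at hj
    exact hπ _ (by simp) hj
  · rintro ⟨i, hi⟩
    rw [← leftPos_comp_childIdx hq1 hqd] at hi
    exact hσ _ (by simp; omega) hi

theorem connGraph_adj_childV_iff {u v : (Fin (d - q) → Bool) ⊕ (Fin (d - q) → Bool)}
    {t s : Bool} :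
    (connGraph d (q - 1) ((Nat.sub_le q 1).trans hqd) π σ).Adj
        (childV d q u t) (childV d q v s) ↔
      (connGraph d q hqd π σ).Adj u v := by
  cases u <;> cases v <;> simp [childV, connRel_childL_childR_iff hq1 hqd π σ hπ hσ]

theorem reachable_childV_iff {u v : (Fin (d - q) → Bool) ⊕ (Fin (d - q) → Bool)}
    {t s : Bool} :
    (connGraph d (q - 1) ((Nat.sub_le q 1).trans hqd) π σ).Reachable
        (childV d q u t) (childV d q v s) ↔
      (connGraph d q hqd π σ).Reachable u v := by
  constructor
  · intro h
    rw [SimpleGraph.reachable_iff_reflTransGen] at h ⊢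
    suffices ∀ w, Relation.ReflTransGen
        (connGraph d (q - 1) ((Nat.sub_le q 1).trans hqd) π σ).Adj (childV d q u t) w →
          ∀ v s, childV d q v s = w → Relation.ReflTransGen (connGraph d q hqd π σ).Adj u v from
      this _ h v s rfl
    intro w hw
    induction hw with
    | refl => exact fun v s h => by rw [(childV_injective2 hq1 hqd h).1]
    | @tail b _ _ hadj ih =>
      rintro v s rfl
      obtain ⟨v', s', rfl⟩ := exists_childV_eq hq1 hqd b
      exact (ih v' s' rfl).tail ((connGraph_adj_childV_iff hq1 hqd π σ hπ hσ).mp hadj)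
  · intro h
    -- two children of `v` are joined through a child of any neighbour of `v`
    obtain ⟨w, hvw⟩ := connGraph_exists_adj hqd π σ v
    have hadj (r : Bool) := (connGraph_adj_childV_iff hq1 hqd π σ hπ hσ (t := r) (s := s)).mpr hvw
    exact (h.map ⟨(childV d q · t), (connGraph_adj_childV_iff hq1 hqd π σ hπ hσ).mpr⟩).trans
      ((hadj t).reachable.trans (hadj s).reachable.symm)

theorem setOf_childV_mem_supp_eq (u₀ : (Fin (d - q) → Bool) ⊕ (Fin (d - q) → Bool))
    (t₀ : Bool) :
    {w | ∃ u ∈ ((connGraph d q hqd π σ).connectedComponentMk u₀).supp, ∃ t, w = childV d q u t} =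
      ((connGraph d (q - 1) ((Nat.sub_le q 1).trans hqd) π σ).connectedComponentMk
        (childV d q u₀ t₀)).supp := by
  ext w
  obtain ⟨u, t, rfl⟩ := exists_childV_eq hq1 hqd w
  simp only [Set.mem_ofPred_eq, SimpleGraph.ConnectedComponent.mem_supp_iff,
    SimpleGraph.ConnectedComponent.eq, reachable_childV_iff hq1 hqd π σ hπ hσ]
  constructor
  · rintro ⟨u', hu', t', h⟩
    rwa [(childV_injective2 hq1 hqd h).1]
  · exact fun h => ⟨u, h, t, rfl⟩

end Children

theorem ncard_image_prod_univ_bool {α β : Type*} {f : α × Bool → β} (hf : Injective f)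
    (S : Set α) : (f '' (S ×ˢ Set.univ)).ncard = 2 * S.ncard := by
  rw [Set.ncard_image_of_injective _ hf, Set.ncard_prod, Set.ncard_univ, Nat.card_eq_fintype_card,
    Fintype.card_bool, mul_comm]

section Count

variable {d q : ℕ} (W : Set ((Fin (d - q) → Bool) ⊕ (Fin (d - q) → Bool)))

theorem setOf_inl_mem_children :
    {x' | Sum.inl x' ∈ {w | ∃ u ∈ W, ∃ t, w = childV d q u t}} =
      uncurry (childL d q) '' ({x | .inl x ∈ W} ×ˢ Set.univ) := by
  ext x'
  simp [Sum.exists, childV, eq_comm, and_or_left, exists_or]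

theorem setOf_inr_mem_children :
    {y' | Sum.inr y' ∈ {w | ∃ u ∈ W, ∃ t, w = childV d q u t}} =
      uncurry (childR d q) '' ({y | .inr y ∈ W} ×ˢ Set.univ) := by
  ext y'
  simp [Sum.exists, childV, eq_comm, and_or_left, exists_or]

end Count

/-- no reused dimensions: if `π (m+1) ∉ {σ q, …, σ d}` and
`σ q ∉ {π 1, …, π (m+1)}` (stated `1`-based in the paper; `0`-based here:
`π ⟨d-q⟩ ∉ σ '' {q-1,…,d-1}` and `σ ⟨q-1⟩ ∉ π '' {0,…,d-q}`), then for every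
connected component `C` of the `q`-dimensional sub-butterfly connectivity
graph, the children of the vertices of `C` form a single connected component
of the `(q-1)`-dimensional connectivity graph, which is complete bipartite
with twice as many vertices on each side as `C`. -/
theorem connectivity_graph_component_no_reused_dimension
    (d q : ℕ) (hq1 : 1 ≤ q) (hqd : q ≤ d) (π σ : Equiv.Perm (Fin d))
    (hπ : ∀ k : Fin d, q - 1 ≤ (k : ℕ) → σ k ≠ π ⟨d - q, by omega⟩)
    (hσ : ∀ k : Fin d, (k : ℕ) ≤ d - q → π k ≠ σ ⟨q - 1, by omega⟩) :
    ∀ C : (connGraph d q hqd π σ).ConnectedComponent,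
      ∃ C' : (connGraph d (q - 1) (by omega) π σ).ConnectedComponent,
        {w | ∃ u ∈ C.supp, ∃ t : Bool, w = childV d q u t} = C'.supp ∧
        (∀ x' y' : Fin (d - (q - 1)) → Bool,
          Sum.inl x' ∈ C'.supp → Sum.inr y' ∈ C'.supp →
          (connGraph d (q - 1) (by omega) π σ).Adj (Sum.inl x') (Sum.inr y')) ∧
        {x' : Fin (d - (q - 1)) → Bool | Sum.inl x' ∈ C'.supp}.ncard =
          2 * {x : Fin (d - q) → Bool | Sum.inl x ∈ C.supp}.ncard ∧
        {y' : Fin (d - (q - 1)) → Bool | Sum.inr y' ∈ C'.supp}.ncard =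
          2 * {y : Fin (d - q) → Bool | Sum.inr y ∈ C.supp}.ncard := by
  refine fun C => C.ind fun u₀ => ?_
  have hsupp := setOf_childV_mem_supp_eq hq1 hqd π σ hπ hσ u₀ true
  refine ⟨_, hsupp, fun x' y' hx hy => ?_, ?_, ?_⟩
  · exact (connGraph_adj_inl_inr _ π σ x' y').mpr
      (connRel_of_reachable _ π σ (SimpleGraph.ConnectedComponent.exact (hx.trans hy.symm)))
  · rw [← hsupp, setOf_inl_mem_children]
    exact ncard_image_prod_univ_bool (childL_injective2 hq1 hqd).uncurry _
  · rw [← hsupp, setOf_inr_mem_children]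
    exact ncard_image_prod_univ_bool (childR_injective2 hq1 hqd).uncurry _
end
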